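/- arXiv:1805.12575 — 9 statements merged into one kernel-verified Lean document; each statement's English description precedes it below -/
import Mathlib

section
/- For every rational number r > 4 there exist natural numbers ℓ, m, p, q such that 2 ≤ ℓ, 4 ≤ m, ℓ < m, m ≤ ℓ + 2, 1 ≤ p, p < q, and r = ℓ + m + (2 − p − q)/q, where the right-hand side is computed in the rational numbers. -/
/-! Take `n = ⌈r⌉₊ ≥ 5`. The defect `n - r ∈ [0, 1)` has the form `(p - 2) / q` with
`1 ≤ p < q` (scale its reduced fraction by `3`), and `n + 1 ≥ 6` splits as `ℓ + m` with
`ℓ < m ≤ ℓ + 2`; then `ℓ + m + (2 - p - q) / q = n - (p - 2) / q = r`. -/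

theorem Rat.exists_eq_natCast_sub_two_div {x : ℚ} (hx₀ : 0 ≤ x) (hx₁ : x < 1) :
    ∃ p q : ℕ, 1 ≤ p ∧ p < q ∧ x = ((p : ℚ) - 2) / q := by
  have hnum : 0 ≤ x.num := Rat.num_nonneg.mpr hx₀
  have hnum_lt : x.num < x.den := Rat.num_lt_denom_iff.mpr hx₁
  have hnum_cast : ((x.num.toNat : ℕ) : ℚ) = x.num := mod_cast Int.toNat_of_nonneg hnum
  refine ⟨3 * x.num.toNat + 2, 3 * x.den, by omega, by omega, ?_⟩
  rw [eq_div_iff (by positivity)]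
  push_cast [hnum_cast]
  linear_combination 3 * Rat.mul_den_eq_num x

theorem Nat.exists_add_eq_of_six_le {n : ℕ} (hn : 6 ≤ n) :
    ∃ ℓ m : ℕ, 2 ≤ ℓ ∧ 4 ≤ m ∧ ℓ < m ∧ m ≤ ℓ + 2 ∧ ℓ + m = n :=
  ⟨(n - 1) / 2, n - (n - 1) / 2, by omega, by omega, by omega, by omega, by omega⟩

/-- For every rational number `r > 4` there exist natural numbers `ℓ, m, p, q` with
`2 ≤ ℓ`, `4 ≤ m`, `ℓ < m`, `m ≤ ℓ + 2`, `1 ≤ p`, `p < q`, such that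
`r = ℓ + m + (2 - p - q)/q` in `ℚ`. -/
theorem stmt_0 (r : ℚ) (hr : 4 < r) :
    ∃ ℓ m p q : ℕ, 2 ≤ ℓ ∧ 4 ≤ m ∧ ℓ < m ∧ m ≤ ℓ + 2 ∧ 1 ≤ p ∧ p < q ∧
      r = (ℓ : ℚ) + (m : ℚ) + (2 - (p : ℚ) - (q : ℚ)) / (q : ℚ) := by
  set n := ⌈r⌉₊
  have hn : 4 < n := Nat.lt_ceil.mpr (mod_cast hr)
  obtain ⟨p, q, hp, hpq, hdefect⟩ :=
    Rat.exists_eq_natCast_sub_two_div (x := n - r) (sub_nonneg.mpr (Nat.le_ceil r))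
      (by linarith [Nat.ceil_lt_add_one (by linarith : (0 : ℚ) ≤ r)])
  obtain ⟨ℓ, m, hℓ, hm, hℓm, hmℓ, hsum⟩ := Nat.exists_add_eq_of_six_le (n := n + 1) (by omega)
  refine ⟨ℓ, m, p, q, hℓ, hm, hℓm, hmℓ, hp, hpq, ?_⟩
  have hq : (q : ℚ) ≠ 0 := by exact_mod_cast (show q ≠ 0 by omega)
  have hsumℚ : (ℓ : ℚ) + m = n + 1 := by exact_mod_cast hsum
  rw [hsumℚ]
  field_simp at hdefect ⊢
  linear_combination -hdefect
end

section
/- There exist real constants c > 0 and C > 0 such that for every real number L ≥ 1, c * L^(13/2) ≤ N(L) ≤ C * L^(13/2), where N(L) := Nat.card {(a,b) : ℤ × ℤ | (|a| : ℝ) ≤ L^3 ∧ (|b| : ℝ) ≤ L^4 ∧ ((a^2 * |b| : ℤ) : ℝ) ≤ L^9} and L^(13/2) denotes Real.rpow L (13/2). -/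
/-!
Write `L = t²`. The region contains the box `[0, t⁵] × [0, t⁸]`, which gives the lower bound.
Conversely, a point `(a, b)` of the region has `|b| (a² + t¹⁰) ≤ a²|b| + t⁸ t¹⁰ ≤ 2 t¹⁸`, so the
fibre over `a` has at most `4 t¹⁸ / (a² + t¹⁰) + 1` points, and `∑ₐ 1 / (a² + t¹⁰) = O(t⁻⁵)`
by comparing with `t⁻¹⁰` for `|a| ≤ t⁵` and with `a⁻²` beyond.
-/

open Finset

lemma sum_Icc_natAbs_le {f : ℕ → ℝ} (hf : ∀ n, 0 ≤ f n) (A : ℕ) :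
    ∑ a ∈ Icc (-(A : ℤ)) A, f a.natAbs ≤ 2 * ∑ n ∈ range (A + 1), f n := by
  rw [← sum_fiberwise_of_maps_to' (t := range (A + 1)) (g := Int.natAbs)
    (fun a ha => by rw [mem_Icc] at ha; rw [mem_range]; omega), mul_sum]
  refine sum_le_sum fun n _ => ?_
  rw [sum_const, nsmul_eq_mul]
  gcongr
  · exact hf n
  have hfibre : {a ∈ Icc (-(A : ℤ)) A | a.natAbs = n} ⊆ {(n : ℤ), -(n : ℤ)} := fun a ha => by
    simp only [mem_filter] at ha
    simp only [mem_insert, mem_singleton]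
    omega
  exact_mod_cast (card_le_card hfibre).trans card_le_two

lemma sum_range_inv_sq_add_sq_le {T : ℝ} (hT : 1 ≤ T) (N : ℕ) :
    ∑ n ∈ range N, ((n : ℝ) ^ 2 + T ^ 2)⁻¹ ≤ 4 / T := by
  set M := ⌊T⌋₊
  have hMT : (M : ℝ) ≤ T := Nat.floor_le (by linarith)
  have hTM : T < M + 1 := Nat.lt_floor_add_one T
  have hsplit : range N ⊆ range (M + 1) ∪ Ioo M N := fun n hn => by
    simp only [mem_range, mem_union, mem_Ioo] at hn ⊢; omega
  have hdisj : Disjoint (range (M + 1)) (Ioo M N) :=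
    disjoint_left.mpr fun n h₁ h₂ => by simp only [mem_range, mem_Ioo] at h₁ h₂; omega
  have hT0 : 0 < T := by linarith
  have hlow : ∑ n ∈ range (M + 1), ((n : ℝ) ^ 2 + T ^ 2)⁻¹ ≤ 2 / T :=
    calc ∑ n ∈ range (M + 1), ((n : ℝ) ^ 2 + T ^ 2)⁻¹
        ≤ ∑ n ∈ range (M + 1), (T ^ 2)⁻¹ :=
          sum_le_sum fun n _ => inv_anti₀ (by positivity) (by nlinarith)
      _ = (M + 1) * (T ^ 2)⁻¹ := by simp
      _ ≤ 2 / T := by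
          rw [← div_eq_mul_inv, div_le_div_iff₀ (by positivity) hT0]; nlinarith
  have hhigh : ∑ n ∈ Ioo M N, ((n : ℝ) ^ 2 + T ^ 2)⁻¹ ≤ 2 / T :=
    calc ∑ n ∈ Ioo M N, ((n : ℝ) ^ 2 + T ^ 2)⁻¹
        ≤ ∑ n ∈ Ioo M N, ((n : ℝ) ^ 2)⁻¹ := by
          refine sum_le_sum fun n hn => inv_anti₀ ?_ (by nlinarith)
          have : 0 < n := by simp only [mem_Ioo] at hn; omega
          positivity
      _ ≤ 2 / (M + 1) := sum_Ioo_inv_sq_le M N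
      _ ≤ 2 / T := by gcongr
  calc ∑ n ∈ range N, ((n : ℝ) ^ 2 + T ^ 2)⁻¹
      ≤ ∑ n ∈ range (M + 1) ∪ Ioo M N, ((n : ℝ) ^ 2 + T ^ 2)⁻¹ :=
        sum_le_sum_of_subset_of_nonneg hsplit fun _ _ _ => by positivity
    _ ≤ 2 / T + 2 / T := by rw [sum_union hdisj]; exact add_le_add hlow hhigh
    _ = 4 / T := by ring

lemma subset_biUnion_Icc_floor {S : Set (ℤ × ℤ)} {s : Finset ℤ} {g : ℤ → ℝ}
    (hS : ∀ a b, (a, b) ∈ S → a ∈ s ∧ |(b : ℝ)| ≤ g a) :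
    S ⊆ s.biUnion fun a => {a} ×ˢ Icc (-(⌊g a⌋₊ : ℤ)) ⌊g a⌋₊ := by
  rintro ⟨a, b⟩ hab
  obtain ⟨ha, hb⟩ := hS a b hab
  have hb' : b.natAbs ≤ ⌊g a⌋₊ := Nat.le_floor (by rwa [Nat.cast_natAbs, Int.cast_abs])
  simp only [coe_biUnion, Set.mem_iUnion, coe_product, coe_singleton, Set.mem_prod,
    Set.mem_singleton_iff, coe_Icc, Set.mem_Icc]
  exact ⟨a, ha, rfl, by omega, by omega⟩

lemma natCard_le_sum_of_forall_abs_le {S : Set (ℤ × ℤ)} {s : Finset ℤ} {g : ℤ → ℝ}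
    (hg : ∀ a ∈ s, 0 ≤ g a) (hS : ∀ a b, (a, b) ∈ S → a ∈ s ∧ |(b : ℝ)| ≤ g a) :
    (Nat.card S : ℝ) ≤ ∑ a ∈ s, (2 * g a + 1) := by
  have hcard : Nat.card S ≤ ∑ a ∈ s, (2 * ⌊g a⌋₊ + 1) :=
    calc Nat.card S ≤ #(s.biUnion fun a => {a} ×ˢ Icc (-(⌊g a⌋₊ : ℤ)) ⌊g a⌋₊) := by
          rw [← Nat.card_eq_finsetCard]
          exact Nat.card_mono (finite_toSet _) (subset_biUnion_Icc_floor hS)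
      _ ≤ ∑ a ∈ s, #({a} ×ˢ Icc (-(⌊g a⌋₊ : ℤ)) ⌊g a⌋₊) := card_biUnion_le
      _ = ∑ a ∈ s, (2 * ⌊g a⌋₊ + 1) := sum_congr rfl fun a _ => by
          rw [card_product, card_singleton, Int.card_Icc]; omega
  calc (Nat.card S : ℝ) ≤ ∑ a ∈ s, ((2 * ⌊g a⌋₊ + 1 : ℕ) : ℝ) := by exact_mod_cast hcard
    _ ≤ ∑ a ∈ s, (2 * g a + 1) := sum_le_sum fun a ha => by
        push_cast; linarith [Nat.floor_le (hg a ha)]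

lemma mul_le_natCard_of_forall_mem {S : Set (ℤ × ℤ)} (hS : S.Finite) {x y : ℝ}
    (hx : 0 ≤ x) (hy : 0 ≤ y)
    (h : ∀ a b : ℤ, 0 ≤ a → (a : ℝ) ≤ x → 0 ≤ b → (b : ℝ) ≤ y → (a, b) ∈ S) :
    x * y ≤ Nat.card S := by
  set box := Icc 0 (⌊x⌋₊ : ℤ) ×ˢ Icc 0 (⌊y⌋₊ : ℤ)
  have hbox : (box : Set (ℤ × ℤ)) ⊆ S := by
    rintro ⟨a, b⟩ hab
    simp only [box, coe_product, coe_Icc, Set.mem_prod, Set.mem_Icc] at hab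
    obtain ⟨⟨ha₀, ha⟩, hb₀, hb⟩ := hab
    refine h a b ha₀ ?_ hb₀ ?_
    · exact (Int.cast_le.mpr ha).trans (Nat.floor_le hx)
    · exact (Int.cast_le.mpr hb).trans (Nat.floor_le hy)
  have hcard : #box = (⌊x⌋₊ + 1) * (⌊y⌋₊ + 1) := by simp [box]
  calc x * y ≤ (⌊x⌋₊ + 1) * (⌊y⌋₊ + 1) :=
        mul_le_mul (Nat.lt_floor_add_one x).le (Nat.lt_floor_add_one y).le hy (by positivity)
    _ = (#box : ℝ) := by rw [hcard]; push_cast; ring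
    _ ≤ Nat.card S := by
        rw [← Nat.card_eq_finsetCard]
        exact_mod_cast Nat.card_mono hS hbox

def latticeRegion (L : ℝ) : Set (ℤ × ℤ) :=
  {ab | (|ab.1| : ℝ) ≤ L ^ 3 ∧ (|ab.2| : ℝ) ≤ L ^ 4 ∧ ((ab.1 ^ 2 * |ab.2| : ℤ) : ℝ) ≤ L ^ 9}

lemma mem_latticeRegion_sq {t : ℝ} (ht : 1 ≤ t) {a b : ℤ} (ha₀ : 0 ≤ a) (ha : (a : ℝ) ≤ t ^ 5)
    (hb₀ : 0 ≤ b) (hb : (b : ℝ) ≤ t ^ 8) : (a, b) ∈ latticeRegion (t ^ 2) := by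
  have ha₀' : (0 : ℝ) ≤ a := by exact_mod_cast ha₀
  have hb₀' : (0 : ℝ) ≤ b := by exact_mod_cast hb₀
  refine ⟨?_, ?_, ?_⟩
  · rw [abs_of_nonneg ha₀', ← pow_mul]
    exact ha.trans (pow_le_pow_right₀ ht (by norm_num))
  · rwa [abs_of_nonneg hb₀', ← pow_mul]
  · push_cast
    rw [abs_of_nonneg hb₀', ← pow_mul]
    calc (a : ℝ) ^ 2 * b ≤ (t ^ 5) ^ 2 * t ^ 8 := by gcongr
      _ = t ^ 18 := by ring

lemma fibre_bound_of_mem_latticeRegion_sq {t : ℝ} (ht : 0 < t) {a b : ℤ}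
    (hab : (a, b) ∈ latticeRegion (t ^ 2)) :
    a ∈ Icc (-(⌊t ^ 6⌋₊ : ℤ)) ⌊t ^ 6⌋₊ ∧
      |(b : ℝ)| ≤ 2 * t ^ 18 * ((a.natAbs : ℝ) ^ 2 + (t ^ 5) ^ 2)⁻¹ := by
  obtain ⟨ha, hb, hab⟩ := hab
  simp only [← pow_mul] at ha hb hab
  push_cast at hab
  constructor
  · have : a.natAbs ≤ ⌊t ^ 6⌋₊ := Nat.le_floor (by rwa [Nat.cast_natAbs, Int.cast_abs])
    rw [mem_Icc]; omega
  · rw [Nat.cast_natAbs, Int.cast_abs, sq_abs, le_mul_inv_iff₀ (by positivity)]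
    calc |(b : ℝ)| * ((a : ℝ) ^ 2 + (t ^ 5) ^ 2) =
          (a : ℝ) ^ 2 * |(b : ℝ)| + |(b : ℝ)| * t ^ 10 := by ring
      _ ≤ t ^ 18 + t ^ 8 * t ^ 10 := by gcongr
      _ = 2 * t ^ 18 := by ring

lemma latticeRegion_sq_finite {t : ℝ} (ht : 0 < t) : (latticeRegion (t ^ 2)).Finite :=
  (finite_toSet _).subset
    (subset_biUnion_Icc_floor fun _ _ hab => fibre_bound_of_mem_latticeRegion_sq ht hab)

lemma pow_thirteen_le_natCard_latticeRegion_sq {t : ℝ} (ht : 1 ≤ t) :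
    t ^ 13 ≤ (Nat.card (latticeRegion (t ^ 2)) : ℝ) :=
  calc t ^ 13 = t ^ 5 * t ^ 8 := by ring
    _ ≤ (Nat.card (latticeRegion (t ^ 2)) : ℝ) :=
      mul_le_natCard_of_forall_mem (latticeRegion_sq_finite (by linarith)) (by positivity)
        (by positivity) fun _ _ ha₀ ha hb₀ hb => mem_latticeRegion_sq ht ha₀ ha hb₀ hb

lemma natCard_latticeRegion_sq_le {t : ℝ} (ht : 1 ≤ t) :
    (Nat.card (latticeRegion (t ^ 2)) : ℝ) ≤ 35 * t ^ 13 := by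
  have ht₀ : 0 < t := by linarith
  set A := ⌊t ^ 6⌋₊
  set f : ℕ → ℝ := fun n => ((n : ℝ) ^ 2 + (t ^ 5) ^ 2)⁻¹
  have hf : ∑ a ∈ Icc (-(A : ℤ)) A, f a.natAbs ≤ 8 / t ^ 5 :=
    calc ∑ a ∈ Icc (-(A : ℤ)) A, f a.natAbs ≤ 2 * ∑ n ∈ range (A + 1), f n :=
          sum_Icc_natAbs_le (fun _ => by positivity) A
      _ ≤ 2 * (4 / t ^ 5) := by
          gcongr; exact sum_range_inv_sq_add_sq_le (one_le_pow₀ ht) _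
      _ = 8 / t ^ 5 := by ring
  have hA : (A : ℝ) ≤ t ^ 6 := Nat.floor_le (by positivity)
  calc (Nat.card (latticeRegion (t ^ 2)) : ℝ)
      ≤ ∑ a ∈ Icc (-(A : ℤ)) A, (2 * (2 * t ^ 18 * f a.natAbs) + 1) :=
        natCard_le_sum_of_forall_abs_le (fun _ _ => by positivity)
          fun _ _ hab => fibre_bound_of_mem_latticeRegion_sq ht₀ hab
    _ = 4 * t ^ 18 * ∑ a ∈ Icc (-(A : ℤ)) A, f a.natAbs + (2 * A + 1) := by
        rw [sum_add_distrib, mul_sum, sum_const, Int.card_Icc, nsmul_one]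
        congr 1
        · exact sum_congr rfl fun _ _ => by ring
        · rw [show (A + 1 - -A : ℤ).toNat = 2 * A + 1 by omega]; push_cast; ring
    _ ≤ 4 * t ^ 18 * (8 / t ^ 5) + (2 * t ^ 6 + 1) := by gcongr
    _ = 32 * t ^ 13 + (2 * t ^ 6 + 1) := by field_simp; ring
    _ ≤ 35 * t ^ 13 := by
        have h₆ : t ^ 6 ≤ t ^ 13 := pow_le_pow_right₀ ht (by norm_num)
        have h₀ : 1 ≤ t ^ 13 := one_le_pow₀ ht
        linarith

lemma rpow_thirteen_halves_sq {t : ℝ} (ht : 0 ≤ t) : (t ^ 2) ^ ((13 : ℝ) / 2) = t ^ 13 := by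
  rw [← Real.rpow_natCast t 2, ← Real.rpow_mul ht]
  norm_num

/-- The number of integer lattice points `(a,b)` with `|a| ≤ L³`, `|b| ≤ L⁴`,
`a²|b| ≤ L⁹` is `Θ(L^(13/2))` for `L ≥ 1`. -/
theorem stmt_3 :
    ∃ c C : ℝ, 0 < c ∧ 0 < C ∧ ∀ L : ℝ, 1 ≤ L →
      c * L ^ ((13 : ℝ) / 2) ≤
        (Nat.card {ab : ℤ × ℤ | (|ab.1| : ℝ) ≤ L ^ 3 ∧ (|ab.2| : ℝ) ≤ L ^ 4 ∧
          ((ab.1 ^ 2 * |ab.2| : ℤ) : ℝ) ≤ L ^ 9} : ℝ) ∧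
      (Nat.card {ab : ℤ × ℤ | (|ab.1| : ℝ) ≤ L ^ 3 ∧ (|ab.2| : ℝ) ≤ L ^ 4 ∧
          ((ab.1 ^ 2 * |ab.2| : ℤ) : ℝ) ≤ L ^ 9} : ℝ) ≤ C * L ^ ((13 : ℝ) / 2) := by
  refine ⟨1, 35, one_pos, by norm_num, fun L hL => ?_⟩
  obtain ⟨t, ht, rfl⟩ : ∃ t : ℝ, 1 ≤ t ∧ t ^ 2 = L :=
    ⟨√L, Real.one_le_sqrt.mpr hL, Real.sq_sqrt (by linarith)⟩
  rw [rpow_thirteen_halves_sq (by linarith), one_mul]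
  exact ⟨pow_thirteen_le_natCard_latticeRegion_sq ht, natCard_latticeRegion_sq_le ht⟩
end

section
/- For every real ε with 0 < ε ≤ 1 there exists a real constant c > 0 such that for every real number L ≥ 2, Nat.card {(a,b) : ℤ × ℤ | (|a| : ℝ) ≤ L^(3−ε) ∧ (|b| : ℝ) ≤ L^(4−ε) ∧ ((a^2 * |b| : ℤ) : ℝ) ≤ L^(9−2ε)} ≥ c * L^(13/2 − (3/2)*ε), where all powers of L with real exponents denote Real.rpow. -/
/-- For `0 < ε ≤ 1`, the number of integer pairs `(a,b)` with `|a| ≤ L^(3-ε)`,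
`|b| ≤ L^(4-ε)`, `a²|b| ≤ L^(9-2ε)` is at least `c L^(13/2 - (3/2)ε)` for `L ≥ 2`. -/
theorem stmt_4 (ε : ℝ) (hε : 0 < ε) (hε1 : ε ≤ 1) :
    ∃ c : ℝ, 0 < c ∧ ∀ L : ℝ, 2 ≤ L →
      c * L ^ ((13 : ℝ) / 2 - (3 / 2) * ε) ≤
        (Nat.card {ab : ℤ × ℤ | (|ab.1| : ℝ) ≤ L ^ ((3 : ℝ) - ε) ∧
          (|ab.2| : ℝ) ≤ L ^ ((4 : ℝ) - ε) ∧
          ((ab.1 ^ 2 * |ab.2| : ℤ) : ℝ) ≤ L ^ ((9 : ℝ) - 2 * ε)} : ℝ) := by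
  refine ⟨1, one_pos, fun L hL => ?_⟩
  have hL0 : (0:ℝ) < L := by linarith
  have hL1 : (1:ℝ) < L := by linarith
  set X := L ^ ((5 - ε)/2) with hX
  set Y := L ^ ((4:ℝ) - ε) with hY
  have hX0 : (0:ℝ) < X := Real.rpow_pos_of_pos hL0 _
  have hY0 : (0:ℝ) < Y := Real.rpow_pos_of_pos hL0 _
  have hX1 : (1:ℝ) ≤ X := Real.one_le_rpow hL1.le (by linarith)
  have hY1 : (1:ℝ) ≤ Y := Real.one_le_rpow hL1.le (by linarith)
  have hX3 : X ≤ L ^ ((3:ℝ) - ε) :=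
    Real.rpow_le_rpow_left_iff hL1 |>.mpr (by linarith)
  have hXsq : X ^ 2 = L ^ ((5:ℝ) - ε) := by
    rw [hX, ← Real.rpow_natCast (L ^ ((5 - ε)/2)) 2, ← Real.rpow_mul hL0.le]
    norm_num
  have hXY : X ^ 2 * Y = L ^ ((9:ℝ) - 2*ε) := by
    rw [hXsq, hY, ← Real.rpow_add hL0]; congr 1; ring
  set S : Set (ℤ × ℤ) := {ab : ℤ × ℤ | (|ab.1| : ℝ) ≤ L ^ ((3 : ℝ) - ε) ∧
          (|ab.2| : ℝ) ≤ L ^ ((4 : ℝ) - ε) ∧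
          ((ab.1 ^ 2 * |ab.2| : ℤ) : ℝ) ≤ L ^ ((9 : ℝ) - 2 * ε)} with hS
  have hfin : S.Finite := by
    apply Set.Finite.subset (Set.finite_Icc
      ((-⌈L ^ ((3:ℝ)-ε)⌉, -⌈L ^ ((4:ℝ)-ε)⌉) : ℤ × ℤ)
      ((⌈L ^ ((3:ℝ)-ε)⌉, ⌈L ^ ((4:ℝ)-ε)⌉) : ℤ × ℤ))
    rintro ⟨a, b⟩ ⟨h1, h2, -⟩
    have ha : |a| ≤ ⌈L ^ ((3:ℝ)-ε)⌉ := by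
      exact_mod_cast h1.trans (Int.le_ceil _)
    have hb : |b| ≤ ⌈L ^ ((4:ℝ)-ε)⌉ := by
      exact_mod_cast h2.trans (Int.le_ceil _)
    rw [abs_le] at ha hb
    exact ⟨⟨ha.1, hb.1⟩, ⟨ha.2, hb.2⟩⟩
  set A := ⌊X⌋₊ with hA
  set B := ⌊Y⌋₊ with hB
  have hAX : (A : ℝ) ≤ X := Nat.floor_le hX0.le
  have hBY : (B : ℝ) ≤ Y := Nat.floor_le hY0.le
  have hsub : (Finset.Icc (-(A:ℤ)) A ×ˢ Finset.Icc (-(B:ℤ)) B) ⊆ hfin.toFinset := by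
    rintro ⟨a, b⟩ hab
    simp only [Finset.mem_product, Finset.mem_Icc] at hab
    have ha : |a| ≤ (A : ℤ) := abs_le.mpr hab.1
    have hb : |b| ≤ (B : ℤ) := abs_le.mpr hab.2
    have haR : (|a| : ℝ) ≤ X := le_trans (by exact_mod_cast ha) hAX
    have hbR : (|b| : ℝ) ≤ Y := le_trans (by exact_mod_cast hb) hBY
    rw [Set.Finite.mem_toFinset, hS]
    refine ⟨haR.trans hX3, hbR, ?_⟩
    have h3 : ((a ^ 2 * |b| : ℤ) : ℝ) ≤ X ^ 2 * Y := by
      push_cast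
      have h1 : (a:ℝ)^2 ≤ X^2 := by
        rw [← sq_abs]
        exact pow_le_pow_left₀ (abs_nonneg _) haR 2
      exact mul_le_mul h1 hbR (abs_nonneg _) (by positivity)
    exact h3.trans hXY.le
  have hcard : Nat.card S = hfin.toFinset.card := by
    rw [Nat.card_eq_card_finite_toFinset hfin]
  have hTcard : (Finset.Icc (-(A:ℤ)) A ×ˢ Finset.Icc (-(B:ℤ)) B).card
      = (2*A+1) * (2*B+1) := by
    rw [Finset.card_product, Int.card_Icc, Int.card_Icc]
    congr 1 <;> omega
  have hle : (2*A+1) * (2*B+1) ≤ Nat.card S := by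
    rw [hcard, ← hTcard]
    exact Finset.card_le_card hsub
  have hXA : X ≤ (2*A+1 : ℝ) := by
    have := Nat.sub_one_lt_floor X
    push_cast
    nlinarith [hX1]
  have hYB : Y ≤ (2*B+1 : ℝ) := by
    have := Nat.sub_one_lt_floor Y
    push_cast
    nlinarith [hY1]
  have hfinal : X * Y ≤ (Nat.card S : ℝ) := by
    calc X * Y ≤ (2*A+1 : ℝ) * (2*B+1 : ℝ) :=
          mul_le_mul hXA hYB hY0.le (by positivity)
      _ = (((2*A+1) * (2*B+1) : ℕ) : ℝ) := by push_cast; ring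
      _ ≤ (Nat.card S : ℝ) := by exact_mod_cast hle
  have hXYfull : X * Y = L ^ ((13:ℝ)/2 - (3/2)*ε) := by
    rw [hX, hY, ← Real.rpow_add hL0]; congr 1; ring
  rw [one_mul, ← hXYfull]
  exact hfinal
end

section
/- Let N(L) := Nat.card {(a,b) : ℤ × ℤ | (|a| : ℝ) ≤ L^3 ∧ (|b| : ℝ) ≤ L^4 ∧ ((a^2 * |b| : ℤ) : ℝ) ≤ L^9}. Then the function L ↦ Real.log (N(L)) / Real.log L tends to 13/2 as L → ∞ (Filter.Tendsto along Filter.atTop to the neighborhood filter of 13/2). -/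
/-!
The box `|a| ≤ L^(5/2)`, `|b| ≤ L^4` lies in the set, so `N(L) ≥ L^(13/2)`. Conversely, counting
column by column, a column with `|a| ≤ L^(5/2)` has at most `2 L^4 + 1` points and a column with
`|a| > L^(5/2)` at most `2 L^9 / a^2 + 1`; since `∑_{a > m} 1/a^2 ≤ 2/m`, this gives
`N(L) ≤ 20 L^(13/2)`. Two-sided bounds `c L^p ≤ N(L) ≤ C L^p` force `log N(L) / log L → p`.
-/

open Finset Filter Real Topology

theorem tendsto_log_div_log_of_bounds {f : ℝ → ℝ} {p c C : ℝ} (hc : 0 < c)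
    (hlow : ∀ᶠ x in atTop, c * x ^ p ≤ f x) (hup : ∀ᶠ x in atTop, f x ≤ C * x ^ p) :
    Tendsto (fun x => log (f x) / log x) atTop (𝓝 p) := by
  have hlim (K : ℝ) : Tendsto (fun x => p + log K / log x) atTop (𝓝 p) := by
    simpa using tendsto_const_nhds.add (tendsto_const_nhds.div_atTop tendsto_log_atTop)
  refine tendsto_of_tendsto_of_tendsto_of_le_of_le' (hlim c) (hlim C) ?_ ?_ <;>
    filter_upwards [hlow, hup, eventually_gt_atTop 1] with x hxc hxC hx
  all_goals
    have hlogx : 0 < log x := log_pos hx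
    have hxp : 0 < x ^ p := rpow_pos_of_pos (by linarith) p
    have hlog_mul {K : ℝ} (hK : 0 < K) : log (K * x ^ p) = (p + log K / log x) * log x := by
      rw [log_mul hK.ne' hxp.ne', log_rpow (by linarith)]
      field_simp
      ring
  · rw [le_div_iff₀ hlogx, ← hlog_mul hc]
    exact log_le_log (by positivity) hxc
  · have hC : 0 < C := pos_of_mul_pos_left ((mul_pos hc hxp).trans_le (hxc.trans hxC)) hxp.le
    rw [div_le_iff₀ hlogx, ← hlog_mul hC]
    exact log_le_log ((mul_pos hc hxp).trans_le hxc) hxC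

noncomputable def intBall (r : ℝ) : Finset ℤ := Icc (-⌊r⌋) ⌊r⌋

theorem mem_intBall {r : ℝ} {b : ℤ} : b ∈ intBall r ↔ |(b : ℝ)| ≤ r := by
  rw [intBall, mem_Icc, ← abs_le, Int.le_floor, Int.cast_abs]

theorem card_intBall {r : ℝ} (hr : 0 ≤ r) : ((intBall r).card : ℝ) = 2 * ⌊r⌋ + 1 := by
  have : 0 ≤ ⌊r⌋ := Int.floor_nonneg.2 hr
  rw [intBall, Int.card_Icc, ← Int.cast_natCast, Int.toNat_of_nonneg (by omega)]
  push_cast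
  ring

theorem lt_card_intBall {r : ℝ} (hr : 0 ≤ r) : r < (intBall r).card := by
  have : (0 : ℝ) ≤ ⌊r⌋ := by exact_mod_cast Int.floor_nonneg.2 hr
  rw [card_intBall hr]
  linarith [Int.lt_floor_add_one r]

theorem card_intBall_le {r : ℝ} (hr : 0 ≤ r) : ((intBall r).card : ℝ) ≤ 2 * r + 1 := by
  rw [card_intBall hr]
  linarith [Int.floor_le r]

theorem natCard_le_sum_of_abs_snd_le {S : Set (ℤ × ℤ)} {I : Finset ℕ} {r : ℕ → ℝ}
    (hr : ∀ n ∈ I, 0 ≤ r n) (hS : ∀ p ∈ S, p.1.natAbs ∈ I ∧ |(p.2 : ℝ)| ≤ r p.1.natAbs) :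
    (Nat.card S : ℝ) ≤ ∑ n ∈ I, 2 * (2 * r n + 1) := by
  classical
  set F := I.biUnion fun n => ({(n : ℤ), -(n : ℤ)} : Finset ℤ) ×ˢ intBall (r n)
  have hSF : S ⊆ F := by
    rintro ⟨a, b⟩ hab
    obtain ⟨ha, hb⟩ := hS _ hab
    refine mem_biUnion.2 ⟨a.natAbs, ha, mem_product.2 ⟨?_, mem_intBall.2 hb⟩⟩
    simpa only [mem_insert, mem_singleton] using Int.natAbs_eq a
  calc (Nat.card S : ℝ) ≤ F.card := by
        exact_mod_cast (Nat.card_mono F.finite_toSet hSF).trans_eq (Nat.card_eq_finsetCard F)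
    _ ≤ ∑ n ∈ I, (2 * (intBall (r n)).card : ℝ) := by
        refine (Nat.cast_le.2 card_biUnion_le).trans ?_
        push_cast
        refine sum_le_sum fun n _ => ?_
        rw [card_product]
        push_cast
        gcongr
        exact_mod_cast card_le_two
    _ ≤ ∑ n ∈ I, 2 * (2 * r n + 1) :=
        sum_le_sum fun n hn => by gcongr; exact card_intBall_le (hr n hn)

def admissibleDegrees (L : ℝ) : Set (ℤ × ℤ) :=
  {ab : ℤ × ℤ | (|ab.1| : ℝ) ≤ L ^ 3 ∧ (|ab.2| : ℝ) ≤ L ^ 4 ∧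
    ((ab.1 ^ 2 * |ab.2| : ℤ) : ℝ) ≤ L ^ 9}

theorem admissibleDegrees_finite (L : ℝ) : (admissibleDegrees L).Finite :=
  (intBall (L ^ 3) ×ˢ intBall (L ^ 4)).finite_toSet.subset fun _ hab =>
    mem_product.2 ⟨mem_intBall.2 hab.1, mem_intBall.2 hab.2.1⟩

theorem rpow_five_halves_sq {L : ℝ} (hL : 0 ≤ L) : (L ^ (5 / 2 : ℝ)) ^ 2 = L ^ 5 := by
  rw [← rpow_natCast, ← rpow_mul hL]
  norm_num

theorem rpow_thirteen_halves {L : ℝ} (hL : 0 < L) : L ^ (13 / 2 : ℝ) = L ^ (5 / 2 : ℝ) * L ^ 4 := by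
  rw [← rpow_natCast, ← rpow_add hL]
  norm_num

theorem rpow_le_card_admissibleDegrees {L : ℝ} (hL : 1 ≤ L) :
    L ^ (13 / 2 : ℝ) ≤ Nat.card (admissibleDegrees L) := by
  set M := L ^ (5 / 2 : ℝ)
  have hM_sq : M ^ 2 = L ^ 5 := rpow_five_halves_sq (by linarith)
  have hM_le : M ≤ L ^ 3 := by
    rw [← rpow_natCast]
    exact rpow_le_rpow_of_exponent_le hL (by norm_num)
  have hbox : ↑(intBall M ×ˢ intBall (L ^ 4)) ⊆ admissibleDegrees L := by
    rintro ⟨a, b⟩ hab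
    rw [coe_product, Set.mem_prod, mem_coe, mem_coe, mem_intBall, mem_intBall] at hab
    refine ⟨hab.1.trans hM_le, hab.2, ?_⟩
    push_cast
    calc (a : ℝ) ^ 2 * |(b : ℝ)| ≤ M ^ 2 * L ^ 4 := by
          have ha_sq : (a : ℝ) ^ 2 ≤ M ^ 2 := sq_le_sq' (abs_le.1 hab.1).1 (abs_le.1 hab.1).2
          exact mul_le_mul ha_sq hab.2 (abs_nonneg _) (sq_nonneg _)
      _ = L ^ 9 := by rw [hM_sq]; ring
  calc L ^ (13 / 2 : ℝ) = M * L ^ 4 := rpow_thirteen_halves (by linarith)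
    _ ≤ (intBall M).card * (intBall (L ^ 4)).card := by
        gcongr
        · exact (lt_card_intBall (by positivity)).le
        · exact (lt_card_intBall (by positivity)).le
    _ ≤ Nat.card (admissibleDegrees L) := by
        rw [← Nat.cast_mul, ← card_product, ← Nat.card_eq_finsetCard]
        exact_mod_cast Nat.card_mono (admissibleDegrees_finite L) hbox

noncomputable def columnBound (L : ℝ) (n : ℕ) : ℝ :=
  if n ≤ ⌊L ^ (5 / 2 : ℝ)⌋₊ then L ^ 4 else L ^ 9 / n ^ 2

theorem columnBound_nonneg {L : ℝ} (hL : 0 ≤ L) (n : ℕ) : 0 ≤ columnBound L n := by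
  unfold columnBound
  split_ifs <;> positivity

theorem abs_le_columnBound {L : ℝ} {a b : ℤ} (hab : (a, b) ∈ admissibleDegrees L) :
    |(b : ℝ)| ≤ columnBound L a.natAbs := by
  obtain ⟨-, hb, hab⟩ := hab
  unfold columnBound
  split_ifs with hk
  · exact hb
  · have ha : 0 < (a.natAbs : ℝ) := by exact_mod_cast (by omega : 0 < a.natAbs)
    rw [le_div_iff₀ (by positivity), Nat.cast_natAbs, Int.cast_abs, sq_abs, mul_comm]
    exact_mod_cast hab

theorem sum_columnBound_le {L : ℝ} (hL : 1 ≤ L) (K : ℕ) :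
    ∑ n ∈ range K, columnBound L n ≤ 3 * L ^ (13 / 2 : ℝ) + L ^ 4 := by
  set M := L ^ (5 / 2 : ℝ)
  set k := ⌊M⌋₊
  have hsplit : ∑ n ∈ range K, columnBound L n ≤ (k + 1) * L ^ 4 + L ^ 9 * (2 / (k + 1)) := by
    unfold columnBound
    rw [sum_ite]
    gcongr ?_ + ?_
    · calc ∑ n ∈ range K with n ≤ k, L ^ 4 ≤ ∑ n ∈ range (k + 1), L ^ 4 :=
            sum_le_sum_of_subset_of_nonneg
              (fun n hn => mem_range.2 (Nat.lt_succ_of_le (mem_filter.1 hn).2))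
              (fun _ _ _ => by positivity)
        _ = (k + 1) * L ^ 4 := by simp
    · calc ∑ n ∈ range K with ¬n ≤ k, L ^ 9 / (n : ℝ) ^ 2
            ≤ ∑ n ∈ Ioo k K, L ^ 9 / (n : ℝ) ^ 2 :=
            sum_le_sum_of_subset_of_nonneg (fun n => by simp; omega) (fun _ _ _ => by positivity)
        _ = L ^ 9 * ∑ n ∈ Ioo k K, ((n : ℝ) ^ 2)⁻¹ := by simp only [mul_sum, div_eq_mul_inv]
        _ ≤ L ^ 9 * (2 / (k + 1)) := by gcongr; exact sum_Ioo_inv_sq_le k K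
  have hk : M < k + 1 := Nat.lt_floor_add_one M
  have hk' : (k : ℝ) ≤ M := Nat.floor_le (by positivity)
  have hL9 : L ^ 9 = M * (M * L ^ 4) := by
    rw [← mul_assoc, ← sq, rpow_five_halves_sq (by linarith)]
    ring
  have htail : L ^ 9 * (2 / (k + 1)) ≤ 2 * (M * L ^ 4) := by
    rw [mul_div_assoc', div_le_iff₀ (by positivity), hL9]
    nlinarith [show 0 ≤ M * L ^ 4 by positivity]
  rw [rpow_thirteen_halves (by linarith)]
  nlinarith [show 0 ≤ L ^ 4 by positivity]

theorem card_admissibleDegrees_le {L : ℝ} (hL : 1 ≤ L) :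
    (Nat.card (admissibleDegrees L) : ℝ) ≤ 20 * L ^ (13 / 2 : ℝ) := by
  set K := ⌊L ^ 3⌋₊
  have hcount : (Nat.card (admissibleDegrees L) : ℝ) ≤
      ∑ n ∈ range (K + 1), 2 * (2 * columnBound L n + 1) := by
    refine natCard_le_sum_of_abs_snd_le (fun n _ => columnBound_nonneg (by linarith) n) ?_
    rintro ⟨a, b⟩ hab
    refine ⟨mem_range.2 (Nat.lt_succ_of_le (Nat.le_floor ?_)), abs_le_columnBound hab⟩
    rw [Nat.cast_natAbs, Int.cast_abs]
    exact hab.1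
  have hsum := sum_columnBound_le hL (K + 1)
  have hK : (K : ℝ) ≤ L ^ 3 := Nat.floor_le (by positivity)
  have hL4_le : L ^ 4 ≤ L ^ (13 / 2 : ℝ) := by
    rw [rpow_thirteen_halves (by linarith)]
    exact le_mul_of_one_le_left (by positivity) (one_le_rpow hL (by norm_num))
  have hL3 : L ^ 3 ≤ L ^ 4 := pow_le_pow_right₀ hL (by norm_num)
  have hL4 : 1 ≤ L ^ 4 := one_le_pow₀ hL
  simp only [mul_add, mul_one, sum_add_distrib, ← mul_sum, sum_const, card_range,
    nsmul_eq_mul] at hcount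
  push_cast at hcount
  linarith

/-- With `N(L)` the number of integer pairs `(a,b)` with `|a| ≤ L³`, `|b| ≤ L⁴`,
`a²|b| ≤ L⁹`, the function `L ↦ log N(L) / log L` tends to `13/2` as `L → ∞`. -/
theorem stmt_5 :
    Filter.Tendsto (fun L : ℝ =>
        Real.log (Nat.card {ab : ℤ × ℤ | (|ab.1| : ℝ) ≤ L ^ 3 ∧ (|ab.2| : ℝ) ≤ L ^ 4 ∧
          ((ab.1 ^ 2 * |ab.2| : ℤ) : ℝ) ≤ L ^ 9} : ℝ) / Real.log L)
      Filter.atTop (nhds (13 / 2)) := by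
  refine tendsto_log_div_log_of_bounds (c := 1) (C := 20) one_pos ?_ ?_ <;>
    filter_upwards [eventually_ge_atTop 1] with L hL
  · rw [one_mul]
    exact rpow_le_card_admissibleDegrees hL
  · exact card_admissibleDegrees_le hL
end

section
/- Fix natural numbers ℓ, m, p, q with 2 ≤ ℓ, ℓ < m, 1 ≤ p, p < q; set n := p*(ℓ−1) + q*(m−1) + 2 and let r := (ℓ : ℝ) + m + (2 − p − q)/q. Then there exist real constants c > 0 and C > 0 such that for every real L ≥ 2, c * L^r ≤ (MeasureTheory.volume {(x,y) : ℝ × ℝ | |x| ≤ L^ℓ ∧ |y| ≤ L^m ∧ |x|^p * |y|^q ≤ L^n}).toReal ≤ C * L^r, where L^r denotes Real.rpow L r. -/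
/-! The box `[-A, A] × [-h, h]` with `A = L^ℓ` and `A^p h^q = L^n`, i.e. `h = L^(r-ℓ)`, lies in the
region (because `h ≤ L^m`) and has area `4 L^r`. Conversely, the part of the region in the strip
`A / 2^(q(j+1)) < |x| ≤ A / 2^(qj)` fits in a box of width `2A / 2^(qj)` and height
`2h · 2^(p(j+1))`; as `p < q` these areas decay geometrically with ratio `2^p / 2^q`, so the
region has area `O(A h) = O(L^r)`. -/

open MeasureTheory Set

def degreeRegion (p q : ℕ) (A B N : ℝ) : Set (ℝ × ℝ) :=
  {xy | |xy.1| ≤ A ∧ |xy.2| ≤ B ∧ |xy.1| ^ p * |xy.2| ^ q ≤ N}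

lemma volume_Icc_neg_prod_Icc_neg (a b : ℝ) :
    volume (Icc (-a) a ×ˢ Icc (-b) b) = ENNReal.ofReal (2 * a) * ENNReal.ofReal (2 * b) := by
  rw [Measure.volume_eq_prod, Measure.prod_prod, Real.volume_Icc, Real.volume_Icc]
  ring_nf

lemma two_pow_div_two_pow_lt_one {p q : ℕ} (hpq : p < q) : (2 : ℝ) ^ p / 2 ^ q < 1 :=
  (div_lt_one (by positivity)).2 (pow_lt_pow_right₀ one_lt_two hpq)

lemma ofReal_le_volume_degreeRegion {p q : ℕ} {A B N h : ℝ} (hA : 0 ≤ A)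
    (hhB : h ≤ B) (hN : A ^ p * h ^ q ≤ N) :
    ENNReal.ofReal (4 * (A * h)) ≤ volume (degreeRegion p q A B N) := by
  calc ENNReal.ofReal (4 * (A * h)) = volume (Icc (-A) A ×ˢ Icc (-h) h) := by
        rw [volume_Icc_neg_prod_Icc_neg, ← ENNReal.ofReal_mul (by positivity)]
        ring_nf
    _ ≤ volume (degreeRegion p q A B N) := by
        refine measure_mono fun xy ⟨hx, hy⟩ ↦ ?_
        have hx := abs_le.2 hx
        have hy := abs_le.2 hy
        refine ⟨hx, hy.trans hhB, le_trans ?_ hN⟩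
        exact mul_le_mul (pow_le_pow_left₀ (abs_nonneg _) hx p)
          (pow_le_pow_left₀ (abs_nonneg _) hy q) (by positivity) (by positivity)

lemma exists_dyadic_scale {p q : ℕ} (hq : q ≠ 0) {A h x y : ℝ} (hh : 0 ≤ h) (hx : x ≠ 0)
    (hxA : |x| ≤ A) (hxy : |x| ^ p * |y| ^ q ≤ A ^ p * h ^ q) :
    ∃ j : ℕ, |x| ≤ A / 2 ^ (q * j) ∧ |y| ≤ h * 2 ^ (p * (j + 1)) := by
  have hx0 : 0 < |x| := abs_pos.2 hx
  obtain ⟨j, hjA, hAj⟩ :=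
    exists_nat_pow_near ((one_le_div hx0).2 hxA) (one_lt_pow₀ one_lt_two hq : (1 : ℝ) < 2 ^ q)
  rw [le_div_iff₀ hx0] at hjA
  rw [div_lt_iff₀ hx0] at hAj
  refine ⟨j, ?_, ?_⟩
  · rw [pow_mul, le_div_iff₀ (by positivity)]
    linarith
  · have : |x| ^ p * |y| ^ q ≤ |x| ^ p * (h * 2 ^ (p * (j + 1))) ^ q :=
      calc |x| ^ p * |y| ^ q ≤ A ^ p * h ^ q := hxy
        _ ≤ ((2 ^ q) ^ (j + 1) * |x|) ^ p * h ^ q := by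
          gcongr
          exact hx0.le.trans hxA
        _ = |x| ^ p * (h * 2 ^ (p * (j + 1))) ^ q := by
          rw [mul_pow, mul_pow, ← pow_mul, ← pow_mul, ← pow_mul]
          ring_nf
    exact (pow_le_pow_iff_left₀ (abs_nonneg y) (by positivity) hq).1
      (le_of_mul_le_mul_left this (pow_pos hx0 p))

lemma volume_degreeRegion_le {p q : ℕ} (hpq : p < q) {A h : ℝ} (hA : 0 ≤ A) (hh : 0 ≤ h)
    (B : ℝ) :
    volume (degreeRegion p q A B (A ^ p * h ^ q)) ≤
      ENNReal.ofReal (4 * 2 ^ p / (1 - 2 ^ p / 2 ^ q) * (A * h)) := by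
  set ρ : ℝ := 2 ^ p / 2 ^ q
  have hρ0 : 0 ≤ ρ := by positivity
  have hρ1 : ρ < 1 := two_pow_div_two_pow_lt_one hpq
  let box : ℕ → Set (ℝ × ℝ) := fun j ↦
    Icc (-(A / 2 ^ (q * j))) (A / 2 ^ (q * j)) ×ˢ
      Icc (-(h * 2 ^ (p * (j + 1)))) (h * 2 ^ (p * (j + 1)))
  have hcover : degreeRegion p q A B (A ^ p * h ^ q) ⊆ ({0} ×ˢ univ) ∪ ⋃ j, box j := by
    rintro ⟨x, y⟩ ⟨hxA, -, hxy⟩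
    rcases eq_or_ne x 0 with rfl | hx
    · exact Or.inl ⟨rfl, trivial⟩
    obtain ⟨j, hxj, hyj⟩ := exists_dyadic_scale (by omega) hh hx hxA hxy
    exact Or.inr (mem_iUnion.2 ⟨j, abs_le.1 hxj, abs_le.1 hyj⟩)
  have hbox : ∀ j, volume (box j) = ENNReal.ofReal (4 * 2 ^ p * (A * h) * ρ ^ j) := by
    intro j
    rw [volume_Icc_neg_prod_Icc_neg, ← ENNReal.ofReal_mul (by positivity)]
    congr 1
    simp only [ρ, div_pow, pow_mul, pow_succ]
    field_simp
    ring
  have hsum : Summable fun j : ℕ ↦ 4 * 2 ^ p * (A * h) * ρ ^ j :=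
    (summable_geometric_of_lt_one hρ0 hρ1).mul_left _
  calc volume (degreeRegion p q A B (A ^ p * h ^ q))
      ≤ volume ({0} ×ˢ univ : Set (ℝ × ℝ)) + volume (⋃ j, box j) :=
        (measure_mono hcover).trans (measure_union_le _ _)
    _ ≤ 0 + ∑' j, volume (box j) := by
        gcongr
        · simp [Measure.volume_eq_prod]
        · exact measure_iUnion_le _
    _ = ENNReal.ofReal (∑' j, 4 * 2 ^ p * (A * h) * ρ ^ j) := by
        rw [zero_add, ENNReal.ofReal_tsum_of_nonneg (fun j ↦ by positivity) hsum]
        simp only [hbox]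
    _ = ENNReal.ofReal (4 * 2 ^ p / (1 - ρ) * (A * h)) := by
        rw [tsum_mul_left, tsum_geometric_of_lt_one hρ0 hρ1]
        ring_nf

lemma toReal_volume_degreeRegion_bounds {p q : ℕ} (hpq : p < q) {A B h : ℝ} (hA : 0 ≤ A)
    (hh : 0 ≤ h) (hhB : h ≤ B) :
    4 * (A * h) ≤ (volume (degreeRegion p q A B (A ^ p * h ^ q))).toReal ∧
      (volume (degreeRegion p q A B (A ^ p * h ^ q))).toReal ≤
        4 * 2 ^ p / (1 - 2 ^ p / 2 ^ q) * (A * h) := by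
  have hup := volume_degreeRegion_le hpq hA hh B
  have hC : (0 : ℝ) ≤ 4 * 2 ^ p / (1 - 2 ^ p / 2 ^ q) :=
    div_nonneg (by positivity) (sub_pos.2 (two_pow_div_two_pow_lt_one hpq)).le
  exact ⟨(ENNReal.ofReal_le_iff_le_toReal (ne_top_of_le_ne_top ENNReal.ofReal_ne_top hup)).1
    (ofReal_le_volume_degreeRegion hA hhB le_rfl),
    ENNReal.toReal_le_of_le_ofReal (mul_nonneg hC (mul_nonneg hA hh)) hup⟩

/-- With `n = p(ℓ-1) + q(m-1) + 2` and `r = ℓ + m + (2-p-q)/q`, the area of the region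
`|x| ≤ L^ℓ, |y| ≤ L^m, |x|^p |y|^q ≤ L^n` is `Θ(L^r)` for `L ≥ 2`. -/
theorem stmt_6 (ℓ m p q : ℕ) (hℓ : 2 ≤ ℓ) (hlm : ℓ < m) (hp : 1 ≤ p) (hpq : p < q)
    (n : ℕ) (hn : n = p * (ℓ - 1) + q * (m - 1) + 2)
    (r : ℝ) (hr : r = (ℓ : ℝ) + (m : ℝ) + (2 - (p : ℝ) - (q : ℝ)) / (q : ℝ)) :
    ∃ c C : ℝ, 0 < c ∧ 0 < C ∧ ∀ L : ℝ, 2 ≤ L →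
      c * L ^ r ≤
        (MeasureTheory.volume {xy : ℝ × ℝ | |xy.1| ≤ L ^ ℓ ∧ |xy.2| ≤ L ^ m ∧
          |xy.1| ^ p * |xy.2| ^ q ≤ L ^ n}).toReal ∧
      (MeasureTheory.volume {xy : ℝ × ℝ | |xy.1| ≤ L ^ ℓ ∧ |xy.2| ≤ L ^ m ∧
          |xy.1| ^ p * |xy.2| ^ q ≤ L ^ n}).toReal ≤ C * L ^ r := by
  have hp' : (1 : ℝ) ≤ p := by exact_mod_cast hp
  have hpq' : (p : ℝ) < q := by exact_mod_cast hpq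
  have hq : (q : ℝ) ≠ 0 := by linarith
  have hC : (0 : ℝ) < 4 * 2 ^ p / (1 - 2 ^ p / 2 ^ q) :=
    div_pos (by positivity) (sub_pos.2 (two_pow_div_two_pow_lt_one hpq))
  refine ⟨4, _, by norm_num, hC, fun L hL2 ↦ ?_⟩
  have hL : 0 < L := by linarith
  set h := L ^ (r - ℓ)
  have hh : 0 ≤ h := Real.rpow_nonneg hL.le _
  have hAh : L ^ ℓ * h = L ^ r := by
    rw [← Real.rpow_natCast, ← Real.rpow_add hL, add_sub_cancel]
  have hN : (L ^ ℓ) ^ p * h ^ q = L ^ n := by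
    simp only [h, ← Real.rpow_natCast, ← Real.rpow_mul hL.le, ← Real.rpow_add hL]
    rw [hn, hr]
    push_cast [Nat.cast_sub (by omega : 1 ≤ ℓ), Nat.cast_sub (by omega : 1 ≤ m)]
    congr 1
    field_simp
    ring
  have hhB : h ≤ L ^ m := by
    rw [← Real.rpow_natCast L m]
    refine Real.rpow_le_rpow_of_exponent_le (by linarith) ?_
    have : (2 - p - q) / (q : ℝ) ≤ 0 := div_nonpos_of_nonpos_of_nonneg (by linarith) (by linarith)
    linarith
  have hbounds := toReal_volume_degreeRegion_bounds hpq (pow_nonneg hL.le ℓ) hh hhB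
  rwa [hN, hAh] at hbounds
end

section
/- Fix natural numbers ℓ, m, p, q with 2 ≤ ℓ, ℓ < m, 1 ≤ p, p < q; set n := p*(ℓ−1) + q*(m−1) + 2 and let r := (ℓ : ℝ) + m + (2 − p − q)/q. Define N(L) := Nat.card {(a,b) : ℤ × ℤ | (|a| : ℝ) ≤ L^ℓ ∧ (|b| : ℝ) ≤ L^m ∧ ((|a|^p * |b|^q : ℤ) : ℝ) ≤ L^n}. Then there exist real constants c > 0 and C > 0 such that for every real L ≥ 2, c * L^r ≤ N(L) ≤ C * L^r, where L^r denotes Real.rpow L r. -/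
/-!
With `e = m + (2 - p - q)/q` one has `pℓ + qe = n`, `0 ≤ e ≤ m` and `ℓ + e = r`. Hence the box
`|a| ≤ L^ℓ`, `|b| ≤ L^e` lies in the region, which gives at least `L^ℓ · L^e = L^r` points.
Conversely, the fibre over `a ≠ 0` has at most `2 L^(n/q) |a|^(-p/q) + 1` points. Summing over
`|a| ≤ L^ℓ` with `∑_{k ≤ N} k^(-s) ≤ N^(1-s)/(1-s)` for `s = p/q < 1` (a telescoping Bernoulli bound)
gives `O(L^(n/q + ℓ(1 - p/q))) = O(L^r)`; the fibre over `a = 0` and the number of columns add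
`O(L^m + L^ℓ)`, and `ℓ, m ≤ r`.
-/

open Finset

lemma mul_rpow_sub_one_le_rpow_sub_rpow {β x : ℝ} (hβ0 : 0 ≤ β) (hβ1 : β ≤ 1) (hx : 1 ≤ x) :
    β * x ^ (β - 1) ≤ x ^ β - (x - 1) ^ β := by
  have hx0 : 0 < x := by linarith
  have hbern := rpow_one_add_le_one_add_mul_self (s := -x⁻¹)
    (by linarith [inv_le_one_of_one_le₀ hx]) hβ0 hβ1
  rw [show 1 + -x⁻¹ = (x - 1) / x by field_simp; ring, Real.div_rpow (by linarith) hx0.le,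
    div_le_iff₀ (by positivity)] at hbern
  rw [Real.rpow_sub_one hx0.ne']
  calc β * (x ^ β / x) = x ^ β - (1 + β * -x⁻¹) * x ^ β := by field_simp; ring
    _ ≤ x ^ β - (x - 1) ^ β := by linarith

lemma sum_range_rpow_neg_le {s : ℝ} (hs0 : 0 ≤ s) (hs1 : s < 1) (N : ℕ) :
    ∑ i ∈ range N, ((i : ℝ) + 1) ^ (-s) ≤ (N : ℝ) ^ (1 - s) / (1 - s) := by
  have hβ : 0 < 1 - s := by linarith
  rw [le_div_iff₀ hβ, sum_mul]
  calc ∑ i ∈ range N, ((i : ℝ) + 1) ^ (-s) * (1 - s)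
      ≤ ∑ i ∈ range N, (((i + 1 : ℕ) : ℝ) ^ (1 - s) - (i : ℝ) ^ (1 - s)) := by
        gcongr with i
        have := mul_rpow_sub_one_le_rpow_sub_rpow hβ.le (by linarith) (x := (i : ℝ) + 1)
          (by linarith [i.cast_nonneg (α := ℝ)])
        push_cast
        rw [sub_sub_cancel_left, add_sub_cancel_right] at this
        linarith
    _ = (N : ℝ) ^ (1 - s) := by
        rw [sum_range_sub (fun i : ℕ => (i : ℝ) ^ (1 - s)), Nat.cast_zero,
          Real.zero_rpow hβ.ne', sub_zero]

lemma mem_Icc_neg_floor {x : ℝ} {a : ℤ} : a ∈ Icc (-⌊x⌋) ⌊x⌋ ↔ (|a| : ℝ) ≤ x := by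
  rw [mem_Icc, neg_le, and_comm, ← abs_le', ← Int.cast_abs, Int.le_floor]

lemma card_Icc_neg_floor {x : ℝ} (hx : 0 ≤ x) :
    ((Icc (-⌊x⌋) ⌊x⌋).card : ℝ) = 2 * ⌊x⌋ + 1 := by
  have : 0 ≤ ⌊x⌋ := Int.floor_nonneg.mpr hx
  rw [Int.card_Icc, ← Int.cast_natCast, Int.toNat_of_nonneg (by omega)]
  push_cast
  ring

lemma le_card_Icc_neg_floor {x : ℝ} (hx : 0 ≤ x) : x ≤ (Icc (-⌊x⌋) ⌊x⌋).card := by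
  rw [card_Icc_neg_floor hx]
  linarith [Int.lt_floor_add_one x, (Int.cast_nonneg (R := ℝ) (Int.floor_nonneg.mpr hx))]

lemma card_Icc_neg_floor_le {x : ℝ} (hx : 0 ≤ x) : ((Icc (-⌊x⌋) ⌊x⌋).card : ℝ) ≤ 2 * x + 1 := by
  rw [card_Icc_neg_floor hx]
  linarith [Int.floor_le x]

lemma sum_Icc_neg_natAbs {M : Type*} [AddCommMonoid M] (f : ℕ → M) (N : ℕ) :
    ∑ a ∈ Icc (-(N : ℤ)) N, f a.natAbs = f 0 + 2 • ∑ i ∈ range N, f (i + 1) := by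
  induction N with
  | zero => simp
  | succ N ih =>
    have hIcc : Icc (-((N + 1 : ℕ) : ℤ)) (N + 1 : ℕ) =
        insert (-(N + 1 : ℤ)) (insert (N + 1 : ℤ) (Icc (-(N : ℤ)) N)) := by
      ext a; simp only [mem_Icc, mem_insert]; omega
    rw [hIcc, sum_insert (by simp only [mem_insert, mem_Icc]; omega),
      sum_insert (by simp only [mem_Icc]; omega), ih, sum_range_succ, smul_add]
    simp only [Int.natAbs_neg]
    rw [show (N + 1 : ℤ).natAbs = N + 1 by omega]
    abel

lemma natCard_le_sum_of_abs_snd_le_s7 {S : Set (ℤ × ℤ)} (s : Finset ℤ) {g : ℤ → ℝ}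
    (hg : ∀ a, 0 ≤ g a) (hS : ∀ ab ∈ S, ab.1 ∈ s ∧ (|ab.2| : ℝ) ≤ g ab.1) :
    (Nat.card S : ℝ) ≤ ∑ a ∈ s, (2 * g a + 1) := by
  have hST : S ⊆ ↑(s.biUnion fun a => {a} ×ˢ Icc (-⌊g a⌋) ⌊g a⌋) := by
    rintro ⟨a, b⟩ hab
    obtain ⟨ha, hb⟩ := hS _ hab
    rw [mem_coe, mem_biUnion]
    exact ⟨a, ha, mem_product.2 ⟨mem_singleton_self a, mem_Icc_neg_floor.2 hb⟩⟩
  calc (Nat.card S : ℝ) ≤ ∑ a ∈ s, (({a} ×ˢ Icc (-⌊g a⌋) ⌊g a⌋).card : ℝ) := by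
        rw [Nat.card_coe_set_eq]
        exact_mod_cast ((Set.ncard_le_ncard hST (finite_toSet _)).trans_eq
          (Set.ncard_coe_finset _)).trans card_biUnion_le
    _ ≤ ∑ a ∈ s, (2 * g a + 1) := by
        gcongr with a
        rw [card_product, card_singleton, one_mul]
        exact card_Icc_neg_floor_le (hg a)

lemma finite_of_forall_abs_le {S : Set (ℤ × ℤ)} (x y : ℝ)
    (hS : ∀ ab ∈ S, (|ab.1| : ℝ) ≤ x ∧ (|ab.2| : ℝ) ≤ y) : S.Finite :=
  (Icc (-⌊x⌋) ⌊x⌋ ×ˢ Icc (-⌊y⌋) ⌊y⌋).finite_toSet.subset fun ab hab => by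
    rw [mem_coe, mem_product, mem_Icc_neg_floor, mem_Icc_neg_floor]
    exact hS ab hab

lemma mul_le_natCard_of_abs_le_imp_mem {S : Set (ℤ × ℤ)} (hS : S.Finite) {x y : ℝ}
    (hx : 0 ≤ x) (hy : 0 ≤ y) (h : ∀ a b : ℤ, (|a| : ℝ) ≤ x → (|b| : ℝ) ≤ y → (a, b) ∈ S) :
    x * y ≤ Nat.card S := by
  have hbox : ↑(Icc (-⌊x⌋) ⌊x⌋ ×ˢ Icc (-⌊y⌋) ⌊y⌋) ⊆ S := by
    rintro ⟨a, b⟩ hab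
    simp only [coe_product, Set.mem_prod, mem_coe, mem_Icc_neg_floor] at hab
    exact h a b hab.1 hab.2
  calc x * y ≤ (Icc (-⌊x⌋) ⌊x⌋ ×ˢ Icc (-⌊y⌋) ⌊y⌋).card := by
        rw [card_product, Nat.cast_mul]
        exact mul_le_mul (le_card_Icc_neg_floor hx) (le_card_Icc_neg_floor hy) hy (by positivity)
    _ ≤ Nat.card S := by
        rw [Nat.card_coe_set_eq, ← Set.ncard_coe_finset]
        exact_mod_cast Set.ncard_le_ncard hbox hS

lemma le_rpow_inv_mul_rpow_neg_of_pow_mul_pow_le {x y z : ℝ} {p q : ℕ} (hx : 0 < x) (hy : 0 ≤ y)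
    (hq : q ≠ 0) (h : x ^ p * y ^ q ≤ z) : y ≤ z ^ (q⁻¹ : ℝ) * x ^ (-(p / q : ℝ)) := by
  have hz : 0 ≤ z := (by positivity : 0 ≤ x ^ p * y ^ q).trans h
  calc y = (y ^ q) ^ (q⁻¹ : ℝ) := (Real.pow_rpow_inv_natCast hy hq).symm
    _ ≤ (z / x ^ p) ^ (q⁻¹ : ℝ) := by
        gcongr
        rwa [le_div_iff₀ (by positivity), mul_comm]
    _ = z ^ (q⁻¹ : ℝ) * x ^ (-(p / q : ℝ)) := by
        rw [Real.div_rpow hz (by positivity), ← Real.rpow_natCast_mul hx.le, div_eq_mul_inv,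
          Real.rpow_neg hx.le, div_eq_mul_inv]

def constraintRegion (ℓ m p q n : ℕ) (L : ℝ) : Set (ℤ × ℤ) :=
  {ab : ℤ × ℤ | (|ab.1| : ℝ) ≤ L ^ ℓ ∧ (|ab.2| : ℝ) ≤ L ^ m ∧
    ((|ab.1| ^ p * |ab.2| ^ q : ℤ) : ℝ) ≤ L ^ n}

section constraintRegion

variable {ℓ m p q n : ℕ} {L e : ℝ}

lemma finite_constraintRegion : (constraintRegion ℓ m p q n L).Finite :=
  finite_of_forall_abs_le (L ^ ℓ) (L ^ m) fun _ h => ⟨h.1, h.2.1⟩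

lemma rpow_le_natCard_constraintRegion (hL : 1 ≤ L) (hem : e ≤ m)
    (hn : (p : ℝ) * ℓ + q * e = n) :
    L ^ ((ℓ : ℝ) + e) ≤ Nat.card (constraintRegion ℓ m p q n L) := by
  have hL0 : 0 < L := by linarith
  rw [Real.rpow_add hL0, Real.rpow_natCast]
  refine mul_le_natCard_of_abs_le_imp_mem finite_constraintRegion (by positivity) (by positivity)
    fun a b ha hb => ⟨ha, hb.trans ?_, ?_⟩
  · simpa using Real.rpow_le_rpow_of_exponent_le hL hem
  · push_cast
    calc |(a : ℝ)| ^ p * |(b : ℝ)| ^ q ≤ (L ^ ℓ) ^ p * (L ^ e) ^ q := by gcongr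
      _ = L ^ n := by
        rw [← Real.rpow_natCast, ← Real.rpow_natCast, ← Real.rpow_natCast (L ^ e),
          ← Real.rpow_mul hL0.le, ← Real.rpow_mul hL0.le, ← Real.rpow_add hL0,
          ← Real.rpow_natCast L n, ← hn]
        ring_nf

/-- `0 ^ (-s) = 0` for `Real.rpow`, so the fibre over `a = 0` is bounded separately, by `L ^ m`. -/
noncomputable def fiberBound (m p q n : ℕ) (L : ℝ) (k : ℕ) : ℝ :=
  if k = 0 then L ^ m else L ^ ((n : ℝ) / q) * (k : ℝ) ^ (-(p / q : ℝ))

lemma fiberBound_nonneg (hL : 0 ≤ L) (k : ℕ) : 0 ≤ fiberBound m p q n L k := by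
  unfold fiberBound
  positivity

lemma abs_snd_le_fiberBound (hL : 0 < L) (hq : q ≠ 0) {ab : ℤ × ℤ}
    (h : ab ∈ constraintRegion ℓ m p q n L) : (|ab.2| : ℝ) ≤ fiberBound m p q n L ab.1.natAbs := by
  obtain ⟨a, b⟩ := ab
  obtain ⟨-, hb, hab⟩ := h
  rcases eq_or_ne a 0 with rfl | ha0
  · simpa [fiberBound] using hb
  · push_cast at hab
    have := le_rpow_inv_mul_rpow_neg_of_pow_mul_pow_le (abs_pos.2 (Int.cast_ne_zero.2 ha0))
      (abs_nonneg _) hq hab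
    simp only [fiberBound, Int.natAbs_eq_zero, ha0, if_false, Nat.cast_natAbs, Int.cast_abs]
    convert this using 2
    rw [← Real.rpow_natCast, ← Real.rpow_mul hL.le, ← div_eq_mul_inv]

lemma sum_fiberBound (N : ℕ) :
    ∑ a ∈ Icc (-(N : ℤ)) N, (2 * fiberBound m p q n L a.natAbs + 1) =
      2 * (L ^ m + 2 * (L ^ ((n : ℝ) / q) * ∑ i ∈ range N, ((i : ℝ) + 1) ^ (-(p / q : ℝ)))) +
        (2 * N + 1) := by
  rw [sum_add_distrib, ← mul_sum, sum_Icc_neg_natAbs, sum_const, Int.card_Icc,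
    show ((N : ℤ) + 1 - -N).toNat = 2 * N + 1 by omega, mul_sum]
  simp only [fiberBound, if_pos, Nat.succ_ne_zero, if_false, nsmul_eq_mul]
  push_cast
  ring

lemma natCard_constraintRegion_le (hL : 1 ≤ L) (hpq : p < q) (he : 0 ≤ e)
    (hme : (m : ℝ) ≤ ℓ + e) (hn : (p : ℝ) * ℓ + q * e = n) :
    (Nat.card (constraintRegion ℓ m p q n L) : ℝ) ≤ (5 + 4 / (1 - p / q)) * L ^ ((ℓ : ℝ) + e) := by
  have hL0 : 0 < L := by linarith
  have hq : 0 < (q : ℝ) := by exact_mod_cast (Nat.zero_le p).trans_lt hpq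
  set s : ℝ := p / q with hs
  have hs1 : s < 1 := (div_lt_one hq).2 (by exact_mod_cast hpq)
  obtain ⟨N, hN⟩ := Int.eq_ofNat_of_zero_le (Int.floor_nonneg.2 (by positivity : 0 ≤ L ^ ℓ))
  have hNL : (N : ℝ) ≤ L ^ ℓ := by exact_mod_cast hN ▸ Int.floor_le (L ^ ℓ)
  have hK : L ^ ((n : ℝ) / q) * ((N : ℝ) ^ (1 - s) / (1 - s)) ≤ L ^ ((ℓ : ℝ) + e) / (1 - s) :=
    calc L ^ ((n : ℝ) / q) * ((N : ℝ) ^ (1 - s) / (1 - s))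
        ≤ L ^ ((n : ℝ) / q) * (L ^ ℓ) ^ (1 - s) / (1 - s) := by
          rw [← mul_div_assoc]
          gcongr
      _ = L ^ ((n : ℝ) / q + ℓ * (1 - s)) / (1 - s) := by
        rw [← Real.rpow_natCast, ← Real.rpow_mul hL0.le, Real.rpow_add hL0]
      _ = L ^ ((ℓ : ℝ) + e) / (1 - s) := by
        congr 2
        rw [hs, ← hn]
        field_simp
        ring
  have hpow : ∀ t : ℝ, t ≤ ℓ + e → L ^ t ≤ L ^ ((ℓ : ℝ) + e) :=
    fun t ht => Real.rpow_le_rpow_of_exponent_le hL ht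
  have hℓ := hpow ℓ (by linarith)
  have hm := hpow m hme
  have h1 := hpow 0 (by positivity)
  rw [Real.rpow_natCast] at hℓ hm
  rw [Real.rpow_zero] at h1
  calc (Nat.card (constraintRegion ℓ m p q n L) : ℝ)
      ≤ ∑ a ∈ Icc (-(N : ℤ)) N, (2 * fiberBound m p q n L a.natAbs + 1) :=
        natCard_le_sum_of_abs_snd_le_s7 _ (fun _ => fiberBound_nonneg hL0.le _) fun ab h =>
          ⟨hN ▸ mem_Icc_neg_floor.2 h.1, abs_snd_le_fiberBound hL0 (by omega) h⟩
    _ = 2 * (L ^ m + 2 * (L ^ ((n : ℝ) / q) * ∑ i ∈ range N, ((i : ℝ) + 1) ^ (-s))) +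
          (2 * N + 1) := sum_fiberBound N
    _ ≤ 2 * (L ^ m + 2 * (L ^ ((n : ℝ) / q) * ((N : ℝ) ^ (1 - s) / (1 - s)))) +
          (2 * L ^ ℓ + 1) := by
        gcongr
        exact sum_range_rpow_neg_le (by positivity) hs1 N
    _ ≤ (5 + 4 / (1 - s)) * L ^ ((ℓ : ℝ) + e) := by
        rw [show ∀ x : ℝ, (5 + 4 / (1 - s)) * x = 5 * x + 4 * (x / (1 - s)) by intro; ring]
        linarith

end constraintRegion

/-- With `n = p(ℓ-1) + q(m-1) + 2` and `r = ℓ + m + (2-p-q)/q`, the number of integer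
pairs `(a,b)` with `|a| ≤ L^ℓ`, `|b| ≤ L^m`, `|a|^p |b|^q ≤ L^n` is `Θ(L^r)` for `L ≥ 2`. -/
theorem stmt_7 (ℓ m p q : ℕ) (hℓ : 2 ≤ ℓ) (hlm : ℓ < m) (hp : 1 ≤ p) (hpq : p < q)
    (n : ℕ) (hn : n = p * (ℓ - 1) + q * (m - 1) + 2)
    (r : ℝ) (hr : r = (ℓ : ℝ) + (m : ℝ) + (2 - (p : ℝ) - (q : ℝ)) / (q : ℝ)) :
    ∃ c C : ℝ, 0 < c ∧ 0 < C ∧ ∀ L : ℝ, 2 ≤ L →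
      c * L ^ r ≤
        (Nat.card {ab : ℤ × ℤ | (|ab.1| : ℝ) ≤ L ^ ℓ ∧ (|ab.2| : ℝ) ≤ L ^ m ∧
          ((|ab.1| ^ p * |ab.2| ^ q : ℤ) : ℝ) ≤ L ^ n} : ℝ) ∧
      (Nat.card {ab : ℤ × ℤ | (|ab.1| : ℝ) ≤ L ^ ℓ ∧ (|ab.2| : ℝ) ≤ L ^ m ∧
          ((|ab.1| ^ p * |ab.2| ^ q : ℤ) : ℝ) ≤ L ^ n} : ℝ) ≤ C * L ^ r := by
  have hpR : (1 : ℝ) ≤ p := by exact_mod_cast hp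
  have hpqR : (p : ℝ) < q := by exact_mod_cast hpq
  have hℓR : (2 : ℝ) ≤ ℓ := by exact_mod_cast hℓ
  have hmR : (ℓ : ℝ) < m := by exact_mod_cast hlm
  have hq : (0 : ℝ) < q := by linarith
  set d : ℝ := (2 - (p : ℝ) - (q : ℝ)) / (q : ℝ)
  have hd0 : d ≤ 0 := div_nonpos_of_nonpos_of_nonneg (by linarith) hq.le
  have hd2 : -2 ≤ d := by
    rw [le_div_iff₀ hq]
    linarith
  have hne : (p : ℝ) * ℓ + q * (m + d) = n := by
    rw [hn]
    push_cast [show 1 ≤ ℓ by omega, show 1 ≤ m by omega, d]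
    field_simp
    ring
  rw [hr, add_assoc]
  refine ⟨1, 5 + 4 / (1 - p / q), one_pos, ?_, fun L hL => ⟨?_, ?_⟩⟩
  · have : 0 < 1 - (p : ℝ) / q := by
      rw [sub_pos, div_lt_one hq]
      exact hpqR
    positivity
  · rw [one_mul]
    exact rpow_le_natCard_constraintRegion (by linarith) (by linarith) hne
  · exact natCard_constraintRegion_le (by linarith) hpq (by linarith) (by linarith) hne
end

section
/- For every rational number r > 4 there exist natural numbers ℓ, m, p, q with 2 ≤ ℓ, 4 ≤ m, ℓ < m, m ≤ ℓ + 2, 1 ≤ p, p < q such that, setting n := p*(ℓ−1) + q*(m−1) + 2 and N(L) := Nat.card {(a,b) : ℤ × ℤ | (|a| : ℝ) ≤ L^ℓ ∧ (|b| : ℝ) ≤ L^m ∧ ((|a|^p * |b|^q : ℤ) : ℝ) ≤ L^n}, the function L ↦ Real.log (N(L)) / Real.log L tends to (r : ℝ) as L → ∞ (Filter.Tendsto along Filter.atTop to the neighborhood filter of (r : ℝ)). -/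
/-!
Write `n = pℓ + qβ`. The box `|a| ≤ L^ℓ`, `|b| ≤ L^β` lies in the region, so `N(L) ≥ L^(ℓ+β)`.
Conversely the fibre over `a ≠ 0` has at most `2 (L^n / |a|^p)^(1/q) + 1` points, and since
`p < q` Bernoulli's inequality gives `∑_{0 < a ≤ L^ℓ} a^(-p/q) ≤ L^(ℓ(1-p/q)) / (1 - p/q)`; this
sums to `O(L^(ℓ+β))`, which also dominates the fibre over `a = 0` as long as `m ≤ ℓ + β`.
Hence `log N(L) / log L → ℓ + β`, which for `n = p(ℓ-1) + q(m-1) + 2` equals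
`ℓ + m - 1 + (2 - p)/q`. Every rational `r > 4` has this form: `r = ⌈r⌉ - c/d` with `0 ≤ c < d`,
so take `p = 3c + 2`, `q = 3d` and `ℓ + m = ⌈r⌉ + 1`.
-/

open Filter Real Topology

lemma rpow_add_mul_rpow_sub_one_le {t : ℝ} (ht₀ : 0 ≤ t) (ht₁ : t ≤ 1) {x : ℝ} (hx : 0 ≤ x) :
    x ^ t + t * (x + 1) ^ (t - 1) ≤ (x + 1) ^ t := by
  have hx₁ : 0 < x + 1 := by linarith
  have bernoulli := rpow_one_add_le_one_add_mul_self (s := -(x + 1)⁻¹)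
    (by rw [neg_le_neg_iff]; exact inv_le_one_of_one_le₀ (by linarith)) ht₀ ht₁
  have hratio : 1 + -(x + 1)⁻¹ = x / (x + 1) := by field_simp; ring
  rw [hratio, div_rpow hx hx₁.le, div_le_iff₀ (rpow_pos_of_pos hx₁ t)] at bernoulli
  have hshift : (x + 1) ^ t = (x + 1) ^ (t - 1) * (x + 1) := by
    rw [← rpow_add_one hx₁.ne', sub_add_cancel]
  calc x ^ t + t * (x + 1) ^ (t - 1)
      ≤ (1 + t * -(x + 1)⁻¹) * (x + 1) ^ t + t * (x + 1) ^ (t - 1) := by linarith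
    _ = (x + 1) ^ t := by rw [hshift]; field_simp; ring

lemma sum_range_add_one_rpow_neg_le {α : ℝ} (hα₀ : 0 ≤ α) (hα₁ : α < 1) (A : ℕ) :
    ∑ i ∈ Finset.range A, ((i : ℝ) + 1) ^ (-α) ≤ (A : ℝ) ^ (1 - α) / (1 - α) := by
  have hα : 0 < 1 - α := by linarith
  induction A with
  | zero => simp [zero_rpow hα.ne']
  | succ A ih =>
    have step := rpow_add_mul_rpow_sub_one_le hα.le (by linarith) (Nat.cast_nonneg A)
    rw [sub_sub_cancel_left] at step
    rw [Finset.sum_range_succ, Nat.cast_succ, le_div_iff₀ hα]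
    rw [le_div_iff₀ hα] at ih
    nlinarith

noncomputable def intsWithin (x : ℝ) : Finset ℤ := Finset.Icc (-⌊x⌋) ⌊x⌋

lemma mem_intsWithin {x : ℝ} {z : ℤ} : z ∈ intsWithin x ↔ |(z : ℝ)| ≤ x := by
  rw [intsWithin, Finset.mem_Icc, ← abs_le, Int.le_floor, Int.cast_abs]

lemma card_intsWithin {x : ℝ} (hx : 0 ≤ x) : ((intsWithin x).card : ℝ) = 2 * ⌊x⌋ + 1 := by
  have hfloor : 0 ≤ ⌊x⌋ := Int.floor_nonneg.2 hx
  rw [intsWithin, Int.card_Icc, show ⌊x⌋ + 1 - -⌊x⌋ = 2 * ⌊x⌋ + 1 by ring]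
  exact_mod_cast Int.toNat_of_nonneg (by omega)

lemma card_intsWithin_le {x : ℝ} (hx : 0 ≤ x) : ((intsWithin x).card : ℝ) ≤ 2 * x + 1 := by
  rw [card_intsWithin hx]; linarith [Int.floor_le x]

lemma le_card_intsWithin {x : ℝ} (hx : 0 ≤ x) : x ≤ (intsWithin x).card := by
  have : (0 : ℝ) ≤ ⌊x⌋ := by exact_mod_cast Int.floor_nonneg.2 hx
  rw [card_intsWithin hx]; linarith [Int.lt_floor_add_one x]

def powerRegion (p q : ℕ) (X Y Z : ℝ) : Set (ℤ × ℤ) :=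
  {ab | (|ab.1| : ℝ) ≤ X ∧ (|ab.2| : ℝ) ≤ Y ∧ ((|ab.1| ^ p * |ab.2| ^ q : ℤ) : ℝ) ≤ Z}

lemma le_mul_rpow_neg_of_pow_mul_pow_le {p q : ℕ} (hq : 0 < q) {u v Z : ℝ} (hu : 0 < u)
    (hv : 0 ≤ v) (h : u ^ p * v ^ q ≤ Z) : v ≤ Z ^ (q : ℝ)⁻¹ * u ^ (-(p / q : ℝ)) := by
  have hup : 0 < u ^ p := pow_pos hu p
  have hZ : 0 ≤ Z := le_trans (by positivity) h
  have hq' : (0 : ℝ) < q := by exact_mod_cast hq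
  have hsplit : Z ^ (q : ℝ)⁻¹ * u ^ (-(p / q : ℝ)) = (Z / u ^ p) ^ (q : ℝ)⁻¹ := by
    rw [div_rpow hZ hup.le, ← rpow_natCast u p, ← rpow_mul hu.le, rpow_neg hu.le,
      div_eq_mul_inv, div_eq_mul_inv]
  rw [hsplit, le_rpow_inv_iff_of_pos hv (by positivity) hq', rpow_natCast,
    le_div_iff₀ hup, mul_comm]
  exact h

lemma powerRegion_subset_box (p q : ℕ) (X Y Z : ℝ) :
    powerRegion p q X Y Z ⊆ ↑(intsWithin X ×ˢ intsWithin Y) := by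
  rintro ⟨a, b⟩ ⟨ha, hb, -⟩
  simp only [Finset.coe_product, Set.mem_prod, Finset.mem_coe, mem_intsWithin]
  exact ⟨ha, hb⟩

lemma powerRegion_finite (p q : ℕ) (X Y Z : ℝ) : (powerRegion p q X Y Z).Finite :=
  (Finset.finite_toSet _).subset (powerRegion_subset_box p q X Y Z)

lemma mul_le_card_powerRegion (p q : ℕ) {X Y Z W : ℝ} (hX : 0 ≤ X) (hW : 0 ≤ W) (hWY : W ≤ Y)
    (hZ : X ^ p * W ^ q ≤ Z) : X * W ≤ Nat.card (powerRegion p q X Y Z) := by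
  have hbox : ↑(intsWithin X ×ˢ intsWithin W) ⊆ powerRegion p q X Y Z := by
    rintro ⟨a, b⟩ hab
    simp only [Finset.coe_product, Set.mem_prod, Finset.mem_coe, mem_intsWithin] at hab
    obtain ⟨ha, hb⟩ := hab
    refine ⟨ha, hb.trans hWY, ?_⟩
    push_cast
    calc |(a : ℝ)| ^ p * |(b : ℝ)| ^ q ≤ X ^ p * W ^ q := by gcongr
      _ ≤ Z := hZ
  calc X * W ≤ (intsWithin X).card * (intsWithin W).card :=
        mul_le_mul (le_card_intsWithin hX) (le_card_intsWithin hW) hW (Nat.cast_nonneg _)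
    _ = (intsWithin X ×ˢ intsWithin W).card := by rw [Finset.card_product, Nat.cast_mul]
    _ ≤ Nat.card (powerRegion p q X Y Z) := by
      rw [Nat.card_coe_set_eq, ← Set.ncard_coe_finset]
      exact_mod_cast Set.ncard_le_ncard hbox (powerRegion_finite p q X Y Z)

lemma powerRegion_subset_fibers (p : ℕ) {q : ℕ} (hq : 0 < q) (X Y Z : ℝ) :
    powerRegion p q X Y Z ⊆ ↑(({0} ×ˢ intsWithin Y) ∪ (Finset.range ⌊X⌋₊).biUnion fun i =>
      ({(i : ℤ) + 1, -((i : ℤ) + 1)} : Finset ℤ) ×ˢ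
        intsWithin (Z ^ (q : ℝ)⁻¹ * ((i : ℝ) + 1) ^ (-(p / q : ℝ)))) := by
  rintro ⟨a, b⟩ ⟨ha, hb, hab⟩
  simp only [Finset.coe_union, Finset.coe_product, Finset.coe_biUnion, Set.mem_union,
    Set.mem_prod, Set.mem_iUnion, Finset.mem_coe, Finset.mem_range, mem_intsWithin] at ha hb ⊢
  rcases eq_or_ne a 0 with rfl | ha₀
  · exact Or.inl ⟨Finset.mem_singleton_self 0, hb⟩
  obtain ⟨i, hi⟩ : ∃ i : ℕ, |a| = i + 1 :=
    ⟨(|a| - 1).toNat, by have := abs_pos.2 ha₀; omega⟩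
  have hiR : |(a : ℝ)| = i + 1 := by rw [← Int.cast_abs, hi]; push_cast; rfl
  refine Or.inr ⟨i, ?_, ?_, ?_⟩
  · exact Nat.lt_of_succ_le (Nat.le_floor (by push_cast; rwa [← hiR]))
  · rcases (abs_eq (by omega)).1 hi with h | h <;> simp [h]
  · rw [← hiR]
    exact le_mul_rpow_neg_of_pow_mul_pow_le hq (abs_pos.2 (Int.cast_ne_zero.2 ha₀))
      (abs_nonneg _) (by exact_mod_cast hab)

lemma card_powerRegion_le {p q : ℕ} (hpq : p < q) {X Y Z : ℝ} (hX : 0 ≤ X) (hY : 0 ≤ Y)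
    (hZ : 0 ≤ Z) :
    (Nat.card (powerRegion p q X Y Z) : ℝ) ≤
      2 * Y + 4 * Z ^ (q : ℝ)⁻¹ * (X ^ (1 - p / q : ℝ) / (1 - p / q)) + 2 * X + 1 := by
  have hq₀ : 0 < q := (Nat.zero_le p).trans_lt hpq
  have hq : (0 : ℝ) < q := by exact_mod_cast hq₀
  have hα₁ : (p / q : ℝ) < 1 := (div_lt_one hq).2 (by exact_mod_cast hpq)
  have hcover := powerRegion_subset_fibers p hq₀ X Y Z
  set g : ℕ → ℝ := fun i => Z ^ (q : ℝ)⁻¹ * ((i : ℝ) + 1) ^ (-(p / q : ℝ))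
  have hfiber (i : ℕ) :
      ((({(i : ℤ) + 1, -((i : ℤ) + 1)} : Finset ℤ) ×ˢ intsWithin (g i)).card : ℝ) ≤
        4 * g i + 2 := by
    rw [Finset.card_product, Nat.cast_mul]
    have hpair : (({(i : ℤ) + 1, -((i : ℤ) + 1)} : Finset ℤ).card : ℝ) ≤ 2 := by
      exact_mod_cast Finset.card_le_two
    have := card_intsWithin_le (x := g i) (by positivity)
    nlinarith
  have hA : (⌊X⌋₊ : ℝ) ≤ X := Nat.floor_le hX
  calc (Nat.card (powerRegion p q X Y Z) : ℝ)
      ≤ ((({0} ×ˢ intsWithin Y) ∪ (Finset.range ⌊X⌋₊).biUnion fun i =>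
          ({(i : ℤ) + 1, -((i : ℤ) + 1)} : Finset ℤ) ×ˢ intsWithin (g i)).card : ℝ) := by
        rw [Nat.card_coe_set_eq, ← Set.ncard_coe_finset]
        exact Nat.cast_le.2 (Set.ncard_le_ncard hcover)
    _ ≤ (intsWithin Y).card + ∑ i ∈ Finset.range ⌊X⌋₊, (4 * g i + 2) := by
        refine (Nat.cast_le.2 (Finset.card_union_le _ _)).trans ?_
        push_cast
        rw [Finset.card_product, Finset.card_singleton, one_mul]
        gcongr
        refine (Nat.cast_le.2 Finset.card_biUnion_le).trans ?_
        push_cast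
        exact Finset.sum_le_sum fun i _ => hfiber i
    _ = (intsWithin Y).card + 4 * Z ^ (q : ℝ)⁻¹ *
          ∑ i ∈ Finset.range ⌊X⌋₊, ((i : ℝ) + 1) ^ (-(p / q : ℝ)) + 2 * ⌊X⌋₊ := by
        rw [Finset.sum_add_distrib, ← Finset.mul_sum, ← Finset.mul_sum]
        simp only [Finset.sum_const, Finset.card_range, nsmul_eq_mul]; ring
    _ ≤ 2 * Y + 1 + 4 * Z ^ (q : ℝ)⁻¹ * (X ^ (1 - p / q : ℝ) / (1 - p / q)) + 2 * X := by
        gcongr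
        · exact card_intsWithin_le hY
        · exact (sum_range_add_one_rpow_neg_le (by positivity) hα₁ _).trans (by gcongr)
    _ = _ := by ring

lemma tendsto_log_div_log_of_le_of_le {f : ℝ → ℝ} {E c C : ℝ} (hc : 0 < c)
    (hlow : ∀ᶠ L in atTop, c * L ^ E ≤ f L) (hup : ∀ᶠ L in atTop, f L ≤ C * L ^ E) :
    Tendsto (fun L => log (f L) / log L) atTop (𝓝 E) := by
  have hlim (K : ℝ) : Tendsto (fun L => (log K + E * log L) / log L) atTop (𝓝 E) := by
    have := (tendsto_const_nhds (x := log K)).div_atTop tendsto_log_atTop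
    refine (by simpa using this.add_const E : Tendsto _ _ _).congr' ?_
    filter_upwards [eventually_gt_atTop 1] with L hL
    field_simp [(log_pos hL).ne']
  refine tendsto_of_tendsto_of_tendsto_of_le_of_le' (hlim c) (hlim C) ?_ ?_
  · filter_upwards [hlow, eventually_gt_atTop 1] with L hcL hL
    have hLE : 0 < L ^ E := rpow_pos_of_pos (by linarith) E
    refine div_le_div_of_nonneg_right ?_ (log_pos hL).le
    rw [← log_rpow (by linarith), ← log_mul hc.ne' hLE.ne']
    exact log_le_log (by positivity) hcL
  · filter_upwards [hlow, hup, eventually_gt_atTop 1] with L hcL hCL hL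
    have hLE : 0 < L ^ E := rpow_pos_of_pos (by linarith) E
    have hf : 0 < f L := (mul_pos hc hLE).trans_le hcL
    have hC : 0 < C := pos_of_mul_pos_left (hf.trans_le hCL) hLE.le
    refine div_le_div_of_nonneg_right ?_ (log_pos hL).le
    rw [← log_rpow (by linarith), ← log_mul hC.ne' hLE.ne']
    exact log_le_log hf hCL

theorem tendsto_log_card_powerRegion_div_log {ℓ m n p q : ℕ} (hpq : p < q) {β : ℝ}
    (hn : (n : ℝ) = p * ℓ + q * β) (hβ₀ : 0 ≤ β) (hβm : β ≤ m) (hmβ : (m : ℝ) ≤ ℓ + β) :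
    Tendsto (fun L : ℝ => log (Nat.card (powerRegion p q (L ^ ℓ) (L ^ m) (L ^ n)) : ℝ) / log L)
      atTop (𝓝 (ℓ + β)) := by
  have hq : (0 : ℝ) < q := by exact_mod_cast (Nat.zero_le p).trans_lt hpq
  refine tendsto_log_div_log_of_le_of_le one_pos ?_ (C := 5 + 4 * (1 - p / q : ℝ)⁻¹) ?_
  · filter_upwards [eventually_ge_atTop 1] with L hL
    have hL₀ : 0 < L := by linarith
    have hcorner : (L ^ ℓ) ^ p * (L ^ β) ^ q = L ^ n := by
      simp only [← rpow_natCast, ← rpow_mul hL₀.le, ← rpow_add hL₀, hn]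
      ring_nf
    rw [one_mul, rpow_add hL₀, rpow_natCast]
    exact mul_le_card_powerRegion p q (by positivity) (by positivity)
      (by rw [← rpow_natCast]; exact rpow_le_rpow_of_exponent_le hL hβm) hcorner.le
  · filter_upwards [eventually_ge_atTop 1] with L hL
    have hL₀ : 0 < L := by linarith
    have hexponent :
        (L ^ n) ^ (q : ℝ)⁻¹ * (L ^ ℓ) ^ (1 - p / q : ℝ) = L ^ ((ℓ : ℝ) + β) := by
      simp only [← rpow_natCast, ← rpow_mul hL₀.le, ← rpow_add hL₀, hn]
      congr 1
      field_simp
      ring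
    have hm : L ^ m ≤ L ^ ((ℓ : ℝ) + β) := by
      rw [← rpow_natCast]; exact rpow_le_rpow_of_exponent_le hL hmβ
    have hℓ : L ^ ℓ ≤ L ^ ((ℓ : ℝ) + β) := by
      rw [← rpow_natCast]; exact rpow_le_rpow_of_exponent_le hL (by linarith)
    have h1 : 1 ≤ L ^ ((ℓ : ℝ) + β) := one_le_rpow hL (by positivity)
    have hα : 0 < (1 - p / q : ℝ)⁻¹ :=
      inv_pos.2 (sub_pos.2 ((div_lt_one hq).2 (by exact_mod_cast hpq)))
    calc (Nat.card (powerRegion p q (L ^ ℓ) (L ^ m) (L ^ n)) : ℝ)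
        ≤ 2 * L ^ m + 4 * (L ^ n) ^ (q : ℝ)⁻¹ * ((L ^ ℓ) ^ (1 - p / q : ℝ) / (1 - p / q))
            + 2 * L ^ ℓ + 1 :=
          card_powerRegion_le hpq (by positivity) (by positivity) (by positivity)
      _ = 2 * L ^ m + 4 * (1 - p / q : ℝ)⁻¹ * L ^ ((ℓ : ℝ) + β) + 2 * L ^ ℓ + 1 := by
          rw [← hexponent]; ring
      _ ≤ (5 + 4 * (1 - p / q : ℝ)⁻¹) * L ^ ((ℓ : ℝ) + β) := by linarith

theorem tendsto_log_card_powerRegion_div_log' {ℓ m p q : ℕ} (hℓ : 2 ≤ ℓ) (hm : 2 ≤ m)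
    (hp : 1 ≤ p) (hpq : p < q) :
    Tendsto (fun L : ℝ => log (Nat.card (powerRegion p q (L ^ ℓ) (L ^ m)
        (L ^ (p * (ℓ - 1) + q * (m - 1) + 2))) : ℝ) / log L)
      atTop (𝓝 ((ℓ : ℝ) + m - 1 + (2 - p) / q)) := by
  have hq : (0 : ℝ) < q := by exact_mod_cast (Nat.zero_le p).trans_lt hpq
  have hpq' : (p : ℝ) + 1 ≤ q := by exact_mod_cast hpq
  have hℓ' : (2 : ℝ) ≤ ℓ := by exact_mod_cast hℓ
  have hm' : (2 : ℝ) ≤ m := by exact_mod_cast hm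
  have hp' : (1 : ℝ) ≤ p := by exact_mod_cast hp
  have hfrac₀ : -1 < (2 - p : ℝ) / q := by rw [lt_div_iff₀ hq]; linarith
  have hfrac₁ : (2 - p : ℝ) / q ≤ 1 := by rw [div_le_one hq]; linarith
  have hn : ((p * (ℓ - 1) + q * (m - 1) + 2 : ℕ) : ℝ) = p * ℓ + q * (m - 1 + (2 - p) / q) := by
    push_cast [Nat.cast_sub (by omega : 1 ≤ ℓ), Nat.cast_sub (by omega : 1 ≤ m)]
    field_simp
    ring
  convert tendsto_log_card_powerRegion_div_log (m := m) hpq hn (by linarith) (by linarith)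
    (by linarith) using 2
  ring

lemma exists_eq_ceil_sub_div (r : ℚ) : ∃ c d : ℕ, c < d ∧ r = ⌈r⌉ - c / d := by
  have hd : (0 : ℚ) < r.den := by exact_mod_cast r.pos
  have hc : ((⌈r⌉ * r.den - r.num : ℤ) : ℚ) = (⌈r⌉ - r) * r.den := by
    push_cast; rw [← Rat.mul_den_eq_num]; ring
  have hc₀ : 0 ≤ ⌈r⌉ * r.den - r.num := by
    exact_mod_cast hc ▸ mul_nonneg (sub_nonneg.2 (Int.le_ceil r)) hd.le
  have hc₁ : ⌈r⌉ * r.den - r.num < r.den := by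
    have : (⌈r⌉ - r) * r.den < r.den := by nlinarith [Int.ceil_lt_add_one r]
    exact_mod_cast hc ▸ this
  refine ⟨(⌈r⌉ * r.den - r.num).toNat, r.den, by omega, ?_⟩
  rw [← Int.cast_natCast, Int.toNat_of_nonneg hc₀, hc]
  field_simp
  ring

/-- For every rational `r > 4` there are natural numbers `ℓ, m, p, q` (with
`2 ≤ ℓ`, `4 ≤ m`, `ℓ < m`, `m ≤ ℓ + 2`, `1 ≤ p < q`) such that, with
`n = p(ℓ-1) + q(m-1) + 2` and `N(L)` the number of integer pairs `(a,b)` with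
`|a| ≤ L^ℓ`, `|b| ≤ L^m`, `|a|^p |b|^q ≤ L^n`, we have `log N(L) / log L → r`. -/
theorem stmt_9 (r : ℚ) (hr : 4 < r) :
    ∃ ℓ m p q : ℕ, 2 ≤ ℓ ∧ 4 ≤ m ∧ ℓ < m ∧ m ≤ ℓ + 2 ∧ 1 ≤ p ∧ p < q ∧
      Filter.Tendsto (fun L : ℝ =>
          Real.log (Nat.card {ab : ℤ × ℤ | (|ab.1| : ℝ) ≤ L ^ ℓ ∧ (|ab.2| : ℝ) ≤ L ^ m ∧
            ((|ab.1| ^ p * |ab.2| ^ q : ℤ) : ℝ) ≤ L ^ (p * (ℓ - 1) + q * (m - 1) + 2)} : ℝ)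
          / Real.log L)
        Filter.atTop (nhds (r : ℝ)) := by
  obtain ⟨c, d, hcd, hrcd⟩ := exists_eq_ceil_sub_div r
  obtain ⟨k, hk⟩ : ∃ k : ℕ, ⌈r⌉ = k := Int.eq_ofNat_of_zero_le (by positivity)
  have hk₅ : 5 ≤ k := by have := (Int.lt_ceil (z := 4)).2 (by exact_mod_cast hr); omega
  refine ⟨k / 2, k + 1 - k / 2, 3 * c + 2, 3 * d, by omega, by omega, by omega, by omega,
    by omega, by omega, ?_⟩
  have hsplit : ((k / 2 : ℕ) : ℝ) + ((k + 1 - k / 2 : ℕ) : ℝ) = k + 1 := by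
    exact_mod_cast (by omega : k / 2 + (k + 1 - k / 2) = k + 1)
  have hexp : (r : ℝ) = ((k / 2 : ℕ) : ℝ) + ((k + 1 - k / 2 : ℕ) : ℝ) - 1
      + (2 - ((3 * c + 2 : ℕ) : ℝ)) / ((3 * d : ℕ) : ℝ) := by
    rw [hsplit, hrcd, hk]
    push_cast
    field_simp
    ring
  rw [hexp]
  exact tendsto_log_card_powerRegion_div_log' (by omega) (by omega) (by omega) (by omega)
end

section
/- In the free Lie algebra FreeLieAlgebra ℚ Bool, let x := FreeLieAlgebra.of ℚ false and y := FreeLieAlgebra.of ℚ true. Then for all natural numbers p, q with 1 ≤ p and 1 ≤ q, the iterated bracket ((LieAlgebra.ad ℚ (FreeLieAlgebra ℚ Bool) x)^[p−1]) (((LieAlgebra.ad ℚ (FreeLieAlgebra ℚ Bool) y)^[q]) x) is nonzero; that is, the element [x,[x,…,[y,[y,…,[y,x]…]]]] with p−1 outer copies of x and q copies of y is not 0. -/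
/-!
Map the free Lie algebra to the Witt algebra of derivations `L n = X ^ (n + 1) • d/dX` of `ℚ[X]`,
sending `x ↦ L 1` and `y ↦ L 2`. Since `⁅L m, L n⁆ = (n - m) • L (n + m)`, the iterated bracket is
sent to `(∏ i < q, (2 i - 1)) * (∏ j < p - 1, (2 q + j)) • L (1 + 2 q + (p - 1))`, whose coefficient is a
product of nonzero integers (odd ones, and positive ones because `q ≥ 1`).
-/

open Polynomial

attribute [local instance 100] LieRing.ofAssociativeRing

namespace Polynomial

variable (R : Type*) [CommRing R]

noncomputable def wittOp (n : ℕ) : Module.End R R[X] :=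
  LinearMap.mulLeft R (X ^ (n + 1)) ∘ₗ derivative

variable {R}

theorem wittOp_apply (n : ℕ) (f : R[X]) : wittOp R n f = X ^ (n + 1) * derivative f := rfl

theorem lie_wittOp (m n : ℕ) :
    ⁅wittOp R m, wittOp R n⁆ = ((n : R) - m) • wittOp R (n + m) := by
  refine LinearMap.ext fun f ↦ ?_
  simp only [Ring.lie_def, LinearMap.sub_apply, Module.End.mul_apply, LinearMap.smul_apply,
    wittOp_apply, derivative_mul, derivative_X_pow_succ, smul_eq_C_mul, map_sub, map_natCast,
    map_add, map_one]
  ring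

theorem smul_wittOp_ne_zero [IsDomain R] {c : R} (hc : c ≠ 0) (n : ℕ) :
    c • wittOp R n ≠ 0 := fun h ↦ by
  have := LinearMap.congr_fun h X
  simp [wittOp_apply, hc] at this

theorem ad_wittOp_iterate (m n k : ℕ) :
    (⇑(LieAlgebra.ad R (Module.End R R[X]) (wittOp R m)))^[k] (wittOp R n)
      = (∏ i ∈ Finset.range k, ((n + i * m : R) - m)) • wittOp R (n + k * m) := by
  induction k with
  | zero => simp
  | succ k ih =>
    rw [Function.iterate_succ_apply', ih, map_smul, LieAlgebra.ad_apply, lie_wittOp,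
      Finset.prod_range_succ, smul_smul, add_assoc, ← Nat.succ_mul, Nat.cast_add, Nat.cast_mul]

end Polynomial

theorem Finset.prod_range_natCast_add_mul_sub_ne_zero {R : Type*} [CommRing R] [IsDomain R]
    [CharZero R] {m n k : ℕ} (h : ∀ i < k, n + i * m ≠ m) :
    ∏ i ∈ Finset.range k, ((n + i * m : R) - m) ≠ 0 :=
  Finset.prod_ne_zero_iff.2 fun i hi ↦
    sub_ne_zero.2 (by exact_mod_cast h i (Finset.mem_range.1 hi))

theorem LieHom.map_ad_iterate {R L L' : Type*} [CommRing R] [LieRing L] [LieAlgebra R L]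
    [LieRing L'] [LieAlgebra R L'] (φ : L →ₗ⁅R⁆ L') (x y : L) (k : ℕ) :
    φ ((⇑(LieAlgebra.ad R L x))^[k] y) = (⇑(LieAlgebra.ad R L' (φ x)))^[k] (φ y) :=
  (Function.Semiconj.iterate_right (f := φ) (fun z ↦ φ.map_lie x z) k) y

theorem stmt_12_general (p q : ℕ) (hq : 1 ≤ q) :
    (⇑(LieAlgebra.ad ℚ (FreeLieAlgebra ℚ Bool) (FreeLieAlgebra.of ℚ false)))^[p - 1]
      ((⇑(LieAlgebra.ad ℚ (FreeLieAlgebra ℚ Bool) (FreeLieAlgebra.of ℚ true)))^[q]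
        (FreeLieAlgebra.of ℚ false)) ≠ 0 := by
  intro h
  have hφ := congrArg (FreeLieAlgebra.lift ℚ fun b : Bool ↦ wittOp ℚ (cond b 2 1)) h
  simp only [LieHom.map_ad_iterate, FreeLieAlgebra.lift_of_apply, cond_true, cond_false,
    map_zero, ad_wittOp_iterate] at hφ
  rw [← Module.End.coe_pow, map_smul, Module.End.coe_pow, ad_wittOp_iterate, smul_smul] at hφ
  refine smul_wittOp_ne_zero (mul_ne_zero ?_ ?_) _ hφ <;>
    exact Finset.prod_range_natCast_add_mul_sub_ne_zero fun i _ ↦ by omega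

/-- In the free Lie algebra on two generators `x, y` over `ℚ`, the iterated bracket
`[x,[x,…,[y,[y,…,[y,x]…]]]]` with `p-1` outer copies of `x` and `q` copies of `y`
(for `1 ≤ p`, `1 ≤ q`) is nonzero. -/
theorem stmt_12 (p q : ℕ) (hp : 1 ≤ p) (hq : 1 ≤ q) :
    (⇑(LieAlgebra.ad ℚ (FreeLieAlgebra ℚ Bool) (FreeLieAlgebra.of ℚ false)))^[p - 1]
      ((⇑(LieAlgebra.ad ℚ (FreeLieAlgebra ℚ Bool) (FreeLieAlgebra.of ℚ true)))^[q]
        (FreeLieAlgebra.of ℚ false)) ≠ 0 :=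
  stmt_12_general p q hq
end

section
/- Fix natural numbers ℓ, m, p, q with 2 ≤ ℓ, ℓ < m, 1 ≤ p, p < q; set n := p*(ℓ−1) + q*(m−1) + 2 and let r := (ℓ : ℝ) + m + (2 − p − q)/q. Then for every real ε with 0 < ε ≤ 1 there exists a real constant c > 0 such that for every real L ≥ 2, Nat.card {(a,b) : ℤ × ℤ | (|a| : ℝ) ≤ L^(ℓ−ε) ∧ (|b| : ℝ) ≤ L^(m−ε) ∧ ((|a|^p * |b|^q : ℤ) : ℝ) ≤ L^(n−2ε)} ≥ c * L^(r − 2ε), where all powers of L with real exponents denote Real.rpow. -/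
/-- With `n = p(ℓ-1) + q(m-1) + 2` and `r = ℓ + m + (2-p-q)/q`, for every `0 < ε ≤ 1`
the number of integer pairs `(a,b)` with `|a| ≤ L^(ℓ-ε)`, `|b| ≤ L^(m-ε)`,
`|a|^p |b|^q ≤ L^(n-2ε)` is at least `c L^(r-2ε)` for `L ≥ 2`. -/
theorem stmt_13 (ℓ m p q : ℕ) (hℓ : 2 ≤ ℓ) (hlm : ℓ < m) (hp : 1 ≤ p) (hpq : p < q)
    (n : ℕ) (hn : n = p * (ℓ - 1) + q * (m - 1) + 2)
    (r : ℝ) (hr : r = (ℓ : ℝ) + (m : ℝ) + (2 - (p : ℝ) - (q : ℝ)) / (q : ℝ)) :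
    ∀ ε : ℝ, 0 < ε → ε ≤ 1 →
      ∃ c : ℝ, 0 < c ∧ ∀ L : ℝ, 2 ≤ L →
        c * L ^ (r - 2 * ε) ≤
          (Nat.card {ab : ℤ × ℤ | (|ab.1| : ℝ) ≤ L ^ ((ℓ : ℝ) - ε) ∧
            (|ab.2| : ℝ) ≤ L ^ ((m : ℝ) - ε) ∧
            ((|ab.1| ^ p * |ab.2| ^ q : ℤ) : ℝ) ≤ L ^ ((n : ℝ) - 2 * ε)} : ℝ) := by
  intro ε hε hε1
  refine ⟨1, one_pos, ?_⟩
  intro L hL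
  have hL1 : (1:ℝ) ≤ L := by linarith
  have hL0 : (0:ℝ) < L := by linarith
  have hp1 : (1:ℝ) ≤ p := by exact_mod_cast hp
  have hq2 : (2:ℝ) ≤ q := by exact_mod_cast (show 2 ≤ q by omega)
  have hq0 : (0:ℝ) < q := by linarith
  have hpq' : (p:ℝ) < q := by exact_mod_cast hpq
  have hℓ2 : (2:ℝ) ≤ ℓ := by exact_mod_cast hℓ
  have hm3 : (3:ℝ) ≤ m := by exact_mod_cast (show 3 ≤ m by omega)
  set α : ℝ := (ℓ:ℝ) - ε with hα
  set β : ℝ := ((q:ℝ) * m + (2 - p - q) + (p - 2) * ε) / q with hβ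
  have hα0 : (0:ℝ) ≤ α := by rw [hα]; linarith
  have hβ0 : (0:ℝ) ≤ β := by
    rw [hβ]
    apply div_nonneg _ hq0.le
    nlinarith
  have hβm : β ≤ (m:ℝ) - ε := by
    rw [hβ, div_le_iff₀ hq0]
    nlinarith
  have hncast : (n:ℝ) = (p:ℝ) * ((ℓ:ℝ) - 1) + (q:ℝ) * ((m:ℝ) - 1) + 2 := by
    have h1 : 1 ≤ ℓ := by omega
    have h2 : 1 ≤ m := by omega
    rw [hn]
    push_cast [Nat.cast_sub h1, Nat.cast_sub h2]
    ring
  have hsum : (p:ℝ) * α + (q:ℝ) * β = (n:ℝ) - 2 * ε := by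
    rw [hβ, mul_div_cancel₀ _ hq0.ne', hncast, hα]
    ring
  have hab : r - 2 * ε ≤ α + β := by
    have h : α + β - (r - 2 * ε) = ((q:ℝ) + p - 2) * ε / q := by
      rw [hr, hα, hβ]; field_simp; ring
    have h2 : (0:ℝ) ≤ ((q:ℝ) + p - 2) * ε / q :=
      div_nonneg (mul_nonneg (by linarith) hε.le) hq0.le
    linarith
  -- the box
  set Na := ⌊L ^ α⌋₊ with hNa
  set Nb := ⌊L ^ β⌋₊ with hNb
  have hLα1 : (1:ℝ) ≤ L ^ α := Real.one_le_rpow hL1 hα0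
  have hLβ1 : (1:ℝ) ≤ L ^ β := Real.one_le_rpow hL1 hβ0
  have hNaub : (Na:ℝ) ≤ L ^ α := Nat.floor_le (by positivity)
  have hNbub : (Nb:ℝ) ≤ L ^ β := Nat.floor_le (by positivity)
  have hNalb : L ^ α - 1 < (Na:ℝ) := Nat.sub_one_lt_floor _
  have hNblb : L ^ β - 1 < (Nb:ℝ) := Nat.sub_one_lt_floor _
  set T : Finset (ℤ × ℤ) :=
    Finset.Icc (-(Na:ℤ)) (Na:ℤ) ×ˢ Finset.Icc (-(Nb:ℤ)) (Nb:ℤ) with hT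
  set S : Set (ℤ × ℤ) := {ab : ℤ × ℤ | (|ab.1| : ℝ) ≤ L ^ ((ℓ : ℝ) - ε) ∧
      (|ab.2| : ℝ) ≤ L ^ ((m : ℝ) - ε) ∧
      ((|ab.1| ^ p * |ab.2| ^ q : ℤ) : ℝ) ≤ L ^ ((n : ℝ) - 2 * ε)} with hS
  have hTS : (T : Set (ℤ × ℤ)) ⊆ S := by
    rintro ⟨a, b⟩ hab'
    simp only [hT, Finset.coe_product, Set.mem_prod, Finset.coe_Icc, Set.mem_Icc] at hab'
    obtain ⟨⟨ha1, ha2⟩, hb1, hb2⟩ := hab'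
    have haN : (|a| : ℝ) ≤ (Na:ℝ) := by
      have : |a| ≤ (Na:ℤ) := abs_le.mpr ⟨ha1, ha2⟩
      exact_mod_cast this
    have hbN : (|b| : ℝ) ≤ (Nb:ℝ) := by
      have : |b| ≤ (Nb:ℤ) := abs_le.mpr ⟨hb1, hb2⟩
      exact_mod_cast this
    have haα : (|a| : ℝ) ≤ L ^ α := le_trans haN hNaub
    have hbβ : (|b| : ℝ) ≤ L ^ β := le_trans hbN hNbub
    refine ⟨haα, le_trans hbβ (Real.rpow_le_rpow_of_exponent_le hL1 hβm), ?_⟩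
    have habs : ((|a| ^ p * |b| ^ q : ℤ) : ℝ) = (|a| : ℝ) ^ p * (|b| : ℝ) ^ q := by
      push_cast; ring
    rw [habs]
    have h1 : (|a| : ℝ) ^ p ≤ (L ^ α) ^ p :=
      pow_le_pow_left₀ (by positivity) haα p
    have h2 : (|b| : ℝ) ^ q ≤ (L ^ β) ^ q :=
      pow_le_pow_left₀ (by positivity) hbβ q
    have h3 : (|a| : ℝ) ^ p * (|b| : ℝ) ^ q ≤ (L ^ α) ^ p * (L ^ β) ^ q :=
      mul_le_mul h1 h2 (by positivity) (by positivity)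
    refine le_trans h3 (le_of_eq ?_)
    rw [← Real.rpow_natCast (L ^ α) p, ← Real.rpow_natCast (L ^ β) q,
      ← Real.rpow_mul hL0.le, ← Real.rpow_mul hL0.le, ← Real.rpow_add hL0]
    congr 1
    linarith [hsum]
  have hSfin : S.Finite := by
    apply Set.Finite.subset (((Set.finite_Icc (-(⌊L ^ ((ℓ:ℝ) - ε)⌋)) ⌊L ^ ((ℓ:ℝ) - ε)⌋).prod
      (Set.finite_Icc (-(⌊L ^ ((m:ℝ) - ε)⌋)) ⌊L ^ ((m:ℝ) - ε)⌋)))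
    rintro ⟨a, b⟩ ⟨h1, h2, _⟩
    have ha : |a| ≤ ⌊L ^ ((ℓ:ℝ) - ε)⌋ := Int.le_floor.mpr (by push_cast at h1 ⊢; exact h1)
    have hb : |b| ≤ ⌊L ^ ((m:ℝ) - ε)⌋ := Int.le_floor.mpr (by push_cast at h2 ⊢; exact h2)
    exact ⟨Set.mem_Icc.mpr (abs_le.mp ha), Set.mem_Icc.mpr (abs_le.mp hb)⟩
  have hcard : T.card ≤ Nat.card S := by
    rw [Nat.card_coe_set_eq]
    calc T.card = (T : Set (ℤ × ℤ)).ncard := (Set.ncard_coe_finset T).symm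
      _ ≤ S.ncard := Set.ncard_le_ncard hTS hSfin
  have hTcard : T.card = (2 * Na + 1) * (2 * Nb + 1) := by
    have e1 : ((Na:ℤ) + 1 - -(Na:ℤ)).toNat = 2 * Na + 1 := by omega
    have e2 : ((Nb:ℤ) + 1 - -(Nb:ℤ)).toNat = 2 * Nb + 1 := by omega
    rw [hT, Finset.card_product, Int.card_Icc, Int.card_Icc, e1, e2]
  have key : L ^ (r - 2 * ε) ≤ (T.card : ℝ) := by
    rw [hTcard]
    push_cast
    have h1 : L ^ α ≤ 2 * (Na:ℝ) + 1 := by linarith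
    have h2 : L ^ β ≤ 2 * (Nb:ℝ) + 1 := by linarith
    calc L ^ (r - 2 * ε) ≤ L ^ (α + β) :=
          Real.rpow_le_rpow_of_exponent_le hL1 hab
      _ = L ^ α * L ^ β := Real.rpow_add hL0 _ _
      _ ≤ (2 * (Na:ℝ) + 1) * (2 * (Nb:ℝ) + 1) :=
          mul_le_mul h1 h2 (by positivity) (by linarith)
  calc (1:ℝ) * L ^ (r - 2 * ε) = L ^ (r - 2 * ε) := one_mul _
    _ ≤ (T.card : ℝ) := key
    _ ≤ (Nat.card S : ℝ) := by exact_mod_cast hcard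
end
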